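/- arXiv:1010.4071 — 6 statements merged into one kernel-verified Lean document; each statement's English description precedes it below -/
import Mathlib

section
/- Let V be a finite-dimensional real vector space. There exists a unique group homomorphism I : PolF(V) → ℤ such that I(1_C) = (−1)^{dim C} for every polyhedral cell C in V, where 1_C is the indicator function of C and dim C is the dimension of C. (Equivalently, I carries each costandard indicator function j_C = (−1)^{dim C}·1_C to 1; I is the integral against Euler-characteristic measure.) -/
/-!
On the line, a function `f : ℝ → ℤ` with left limits everywhere, a limit at `+∞` and finitely
many jumps has Euler integral `∑ₓ (f x - f (x⁻)) - f (+∞)`. This is additive, equals `1` on a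
point and `-1` on a nonempty open interval.

For `W × ℝ` one integrates along the vertical lines. A cell `C` either lies in the graph of an
affine function over its projection `π C` (if one of its equations involves the last
coordinate; then every nonempty slice is a point and `dim C = dim π C`), or its equations do not
involve the last coordinate (then every nonempty slice is an open interval, `π C` is a cell by
Fourier–Motzkin elimination, and `dim C = dim π C + 1`). Either way the fibre integral of `1_C`
is `± 1_{π C}` with the sign compensating the change of dimension, so composing with the
homomorphism for `W` gives one for `W × ℝ`. Induction on the dimension gives existence;
uniqueness holds because indicators of cells generate `PolF V`.
-/

/-- A polyhedral cell in a real vector space: a nonempty subset cut out by finitely many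
affine-linear equalities and finitely many strict affine-linear inequalities. -/
def IsPolyhedralCell {W : Type*} [AddCommGroup W] [Module ℝ W] (C : Set W) : Prop :=
  C.Nonempty ∧
    ∃ (p q : ℕ) (f : Fin p → (W →ᵃ[ℝ] ℝ)) (g : Fin q → (W →ᵃ[ℝ] ℝ)),
      C = {x | (∀ i, f i x = 0) ∧ ∀ j, 0 < g j x}

/-- The dimension of a subset of a real vector space: the dimension of its affine span. -/
noncomputable def cellDim {W : Type*} [AddCommGroup W] [Module ℝ W] (C : Set W) : ℕ :=
  Module.finrank ℝ (affineSpan ℝ C).direction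

open Classical in
/-- The (integer-valued) indicator function of a set. -/
noncomputable def ind {W : Type*} (C : Set W) : W → ℤ := fun x => if x ∈ C then 1 else 0

/-- The group of polyhedral functions on `W`: the subgroup of the additive group of
functions `W → ℤ` generated by indicator functions of polyhedral cells. -/
def PolF (W : Type*) [AddCommGroup W] [Module ℝ W] : AddSubgroup (W → ℤ) :=
  AddSubgroup.closure {f | ∃ C : Set W, IsPolyhedralCell C ∧ f = ind C}

theorem ind_mem_PolF {W : Type*} [AddCommGroup W] [Module ℝ W] {C : Set W}
    (hC : IsPolyhedralCell C) : ind C ∈ PolF W :=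
  AddSubgroup.subset_closure ⟨C, hC, rfl⟩

/-- `I : PolF W →+ ℤ` is integration against Euler-characteristic measure if it sends
the indicator function of every polyhedral cell `C` to `(-1) ^ dim C`. -/
def IsEulerHom {W : Type*} [AddCommGroup W] [Module ℝ W] (I : PolF W →+ ℤ) : Prop :=
  ∀ (C : Set W) (hC : IsPolyhedralCell C),
    I ⟨ind C, ind_mem_PolF hC⟩ = (-1) ^ cellDim C

open Filter Topology Set Function

universe u

lemma ind_apply_of_mem {X : Type*} {C : Set X} {x : X} (h : x ∈ C) : ind C x = 1 := by
  simp [ind, h]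

lemma ind_apply_of_notMem {X : Type*} {C : Set X} {x : X} (h : x ∉ C) : ind C x = 0 := by
  simp [ind, h]

lemma ind_empty {X : Type*} : ind (∅ : Set X) = 0 := by
  ext; simp [ind]

lemma ind_univ {X : Type*} : ind (univ : Set X) = 1 := by
  ext; simp [ind]

noncomputable def jump (f : ℝ → ℤ) (x : ℝ) : ℤ := f x - leftLim f x

lemma jump_add {f g : ℝ → ℤ} {x : ℝ} (hf : ∃ c, Tendsto f (𝓝[<] x) (𝓝 c))
    (hg : ∃ c, Tendsto g (𝓝[<] x) (𝓝 c)) : jump (f + g) x = jump f x + jump g x := by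
  obtain ⟨a, ha⟩ := hf
  obtain ⟨b, hb⟩ := hg
  have : leftLim (f + g) x = a + b := leftLim_eq_of_tendsto (ha.add hb)
  rw [jump, jump, jump, this, leftLim_eq_of_tendsto ha, leftLim_eq_of_tendsto hb, Pi.add_apply]
  ring

lemma jump_neg {f : ℝ → ℤ} {x : ℝ} (hf : ∃ c, Tendsto f (𝓝[<] x) (𝓝 c)) :
    jump (-f) x = -jump f x := by
  obtain ⟨a, ha⟩ := hf
  have : leftLim (-f) x = -a := leftLim_eq_of_tendsto ha.neg
  rw [jump, jump, this, leftLim_eq_of_tendsto ha, Pi.neg_apply]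
  ring

lemma jump_eq_zero_of_continuousWithinAt {f : ℝ → ℤ} {x : ℝ}
    (hf : ContinuousWithinAt f (Iio x) x) : jump f x = 0 := by
  rw [jump, leftLim_eq_of_tendsto hf.tendsto, sub_self]

def tameFunctions : AddSubgroup (ℝ → ℤ) where
  carrier := {f | (∀ x, ∃ c, Tendsto f (𝓝[<] x) (𝓝 c)) ∧ (∃ c, Tendsto f atTop (𝓝 c)) ∧
    (support (jump f)).Finite}
  zero_mem' := ⟨fun _ => ⟨0, tendsto_const_nhds⟩, ⟨0, tendsto_const_nhds⟩,
    finite_empty.subset fun _ hx =>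
      hx (jump_eq_zero_of_continuousWithinAt continuousWithinAt_const)⟩
  add_mem' := by
    rintro f g ⟨hfl, ⟨a, ha⟩, hfj⟩ ⟨hgl, ⟨b, hb⟩, hgj⟩
    refine ⟨fun x => ?_, ⟨a + b, ha.add hb⟩, (hfj.union hgj).subset fun x hx => ?_⟩
    · obtain ⟨c, hc⟩ := hfl x
      obtain ⟨d, hd⟩ := hgl x
      exact ⟨c + d, hc.add hd⟩
    · contrapose! hx
      simp_all [jump_add (hfl x) (hgl x)]
  neg_mem' := by
    rintro f ⟨hfl, ⟨a, ha⟩, hfj⟩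
    refine ⟨fun x => ?_, ⟨-a, ha.neg⟩, hfj.subset fun x hx => ?_⟩
    · obtain ⟨c, hc⟩ := hfl x
      exact ⟨-c, hc.neg⟩
    · simpa [jump_neg (hfl x)] using hx

/-- Junk outside `tameFunctions`, where the sum or the limit may not exist. -/
noncomputable def lineEulerInt (f : ℝ → ℤ) : ℤ := ∑ᶠ x, jump f x - limUnder atTop f

lemma lineEulerInt_add {f g : ℝ → ℤ} (hf : f ∈ tameFunctions) (hg : g ∈ tameFunctions) :
    lineEulerInt (f + g) = lineEulerInt f + lineEulerInt g := by
  obtain ⟨hfl, ⟨a, ha⟩, hfj⟩ := hf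
  obtain ⟨hgl, ⟨b, hb⟩, hgj⟩ := hg
  have hab : limUnder atTop (f + g) = a + b := (ha.add hb).limUnder_eq
  rw [lineEulerInt, lineEulerInt, lineEulerInt, finsum_congr fun x => jump_add (hfl x) (hgl x),
    finsum_add_distrib hfj hgj, ha.limUnder_eq, hb.limUnder_eq, hab]
  ring

lemma mem_tameFunctions_of_continuousWithinAt {f : ℝ → ℤ} {c : ℤ}
    (hf : ∀ x, ContinuousWithinAt f (Iio x) x) (hc : Tendsto f atTop (𝓝 c)) :
    f ∈ tameFunctions :=
  ⟨fun x => ⟨f x, hf x⟩, ⟨c, hc⟩,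
    finite_empty.subset fun x hx => hx (jump_eq_zero_of_continuousWithinAt (hf x))⟩

lemma lineEulerInt_of_continuousWithinAt {f : ℝ → ℤ} {c : ℤ}
    (hf : ∀ x, ContinuousWithinAt f (Iio x) x) (hc : Tendsto f atTop (𝓝 c)) :
    lineEulerInt f = -c := by
  simp [lineEulerInt, jump_eq_zero_of_continuousWithinAt (hf _), hc.limUnder_eq]

lemma lineEulerInt_zero : lineEulerInt 0 = 0 := by
  simpa using lineEulerInt_of_continuousWithinAt (f := 0) (c := 0)
    (fun _ => continuousWithinAt_const) tendsto_const_nhds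

lemma lineEulerInt_neg {f : ℝ → ℤ} (hf : f ∈ tameFunctions) :
    lineEulerInt (-f) = -lineEulerInt f := by
  have h := lineEulerInt_add (neg_mem hf) hf
  rw [neg_add_cancel, lineEulerInt_zero] at h
  omega

lemma lineEulerInt_sub {f g : ℝ → ℤ} (hf : f ∈ tameFunctions) (hg : g ∈ tameFunctions) :
    lineEulerInt (f - g) = lineEulerInt f - lineEulerInt g := by
  rw [sub_eq_add_neg, lineEulerInt_add hf (neg_mem hg), lineEulerInt_neg hg, sub_eq_add_neg]

lemma continuousWithinAt_ind_Ioi (a x : ℝ) : ContinuousWithinAt (ind (Ioi a)) (Iio x) x := by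
  apply tendsto_nhds_of_eventually_eq
  rcases lt_or_ge a x with hax | hxa
  · filter_upwards [nhdsWithin_le_nhds (Ioi_mem_nhds hax)] with t ht
    simp [ind, ht, hax]
  · filter_upwards [self_mem_nhdsWithin] with t ht
    simp [ind, not_lt.2 hxa, not_lt.2 (le_of_lt (lt_of_lt_of_le (mem_Iio.1 ht) hxa))]

lemma tendsto_ind_Ioi_atTop (a : ℝ) : Tendsto (ind (Ioi a)) atTop (𝓝 1) :=
  tendsto_nhds_of_eventually_eq <| (eventually_gt_atTop a).mono fun t ht => by simp [ind, ht]

lemma ind_Ioi_mem_tameFunctions (a : ℝ) : ind (Ioi a) ∈ tameFunctions :=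
  mem_tameFunctions_of_continuousWithinAt (continuousWithinAt_ind_Ioi a) (tendsto_ind_Ioi_atTop a)

lemma lineEulerInt_ind_Ioi (a : ℝ) : lineEulerInt (ind (Ioi a)) = -1 :=
  lineEulerInt_of_continuousWithinAt (continuousWithinAt_ind_Ioi a) (tendsto_ind_Ioi_atTop a)

lemma tendsto_ind_singleton_nhdsLT (a x : ℝ) : Tendsto (ind {a}) (𝓝[<] x) (𝓝 0) := by
  apply tendsto_nhds_of_eventually_eq
  have hne : ∀ᶠ t in 𝓝[<] x, t ≠ a := by
    rcases eq_or_ne x a with rfl | hxa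
    · exact eventually_mem_nhdsWithin.mono fun t ht => ne_of_lt ht
    · exact eventually_ne_nhdsWithin hxa
  exact hne.mono fun t ht => by simp [ind, ht]

lemma jump_ind_singleton (a : ℝ) : jump (ind {a}) = ind {a} := by
  ext x
  rw [jump, leftLim_eq_of_tendsto (tendsto_ind_singleton_nhdsLT a x), sub_zero]

lemma tendsto_ind_singleton_atTop (a : ℝ) : Tendsto (ind {a}) atTop (𝓝 0) :=
  tendsto_nhds_of_eventually_eq <| (eventually_ne_atTop a).mono fun t ht => by simp [ind, ht]

lemma support_ind (C : Set ℝ) : support (ind C) = C := by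
  ext; simp [ind]

lemma ind_singleton_mem_tameFunctions (a : ℝ) : ind {a} ∈ tameFunctions :=
  ⟨fun x => ⟨0, tendsto_ind_singleton_nhdsLT a x⟩, ⟨0, tendsto_ind_singleton_atTop a⟩, by
    simp [jump_ind_singleton, support_ind]⟩

lemma lineEulerInt_ind_singleton (a : ℝ) : lineEulerInt (ind {a}) = 1 := by
  rw [lineEulerInt, jump_ind_singleton, (tendsto_ind_singleton_atTop a).limUnder_eq,
    finsum_eq_single _ a fun x hx => by simp [ind, hx]]
  simp [ind]

lemma one_mem_tameFunctions : (1 : ℝ → ℤ) ∈ tameFunctions :=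
  mem_tameFunctions_of_continuousWithinAt (fun _ => continuousWithinAt_const) tendsto_const_nhds

lemma lineEulerInt_one : lineEulerInt 1 = -1 :=
  lineEulerInt_of_continuousWithinAt (fun _ => continuousWithinAt_const) tendsto_const_nhds

lemma IsOpen.eq_Ioo_or_Ioi_or_Iio_or_univ {S : Set ℝ} (hS : IsOpen S) (hc : IsPreconnected S) :
    (∃ a b, S = Ioo a b) ∨ (∃ a, S = Ioi a) ∨ (∃ b, S = Iio b) ∨ S = univ := by
  have h := hc.mem_intervals
  rw [← hS.interior_eq]
  simp only [mem_insert_iff, mem_singleton_iff] at h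
  rcases h with h | h | h | h | h | h | h | h | h | h <;> rw [h] <;>
    simp [interior_Icc, interior_Ico, interior_Ioc]
  exact Or.inl ⟨0, 0, by simp⟩

lemma ind_Ioo {a b : ℝ} (hab : a < b) : ind (Ioo a b) = ind (Ioi a) - ind (Ioi b) - ind {b} := by
  ext t
  simp only [ind, mem_Ioo, mem_Ioi, mem_singleton_iff, Pi.sub_apply]
  split_ifs <;> grind

lemma ind_Iio (b : ℝ) : ind (Iio b) = 1 - ind (Ioi b) - ind {b} := by
  ext t
  simp only [ind, mem_Iio, mem_Ioi, mem_singleton_iff, Pi.sub_apply, Pi.one_apply]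
  split_ifs <;> grind

lemma IsOpen.lineEulerInt_ind {S : Set ℝ} (hS : IsOpen S) (hc : IsPreconnected S)
    (hne : S.Nonempty) : ind S ∈ tameFunctions ∧ lineEulerInt (ind S) = -1 := by
  have hIoi := ind_Ioi_mem_tameFunctions
  have hpt := ind_singleton_mem_tameFunctions
  rcases hS.eq_Ioo_or_Ioi_or_Iio_or_univ hc with ⟨a, b, rfl⟩ | ⟨a, rfl⟩ | ⟨b, rfl⟩ | rfl
  · rw [ind_Ioo (nonempty_Ioo.1 hne)]
    refine ⟨sub_mem (sub_mem (hIoi a) (hIoi b)) (hpt b), ?_⟩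
    rw [lineEulerInt_sub (sub_mem (hIoi a) (hIoi b)) (hpt b), lineEulerInt_sub (hIoi a) (hIoi b),
      lineEulerInt_ind_Ioi, lineEulerInt_ind_Ioi, lineEulerInt_ind_singleton]
    norm_num
  · exact ⟨hIoi a, lineEulerInt_ind_Ioi a⟩
  · rw [ind_Iio]
    refine ⟨sub_mem (sub_mem one_mem_tameFunctions (hIoi b)) (hpt b), ?_⟩
    rw [lineEulerInt_sub (sub_mem one_mem_tameFunctions (hIoi b)) (hpt b),
      lineEulerInt_sub one_mem_tameFunctions (hIoi b), lineEulerInt_one, lineEulerInt_ind_Ioi,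
      lineEulerInt_ind_singleton]
    norm_num
  · rw [ind_univ]
    exact ⟨one_mem_tameFunctions, lineEulerInt_one⟩

section Polyhedral

variable {W W' : Type*} [AddCommGroup W] [Module ℝ W] [AddCommGroup W'] [Module ℝ W']
  {ι κ : Type*}

def polyhedralSet (f : ι → W →ᵃ[ℝ] ℝ) (g : κ → W →ᵃ[ℝ] ℝ) : Set W :=
  {x | (∀ i, f i x = 0) ∧ ∀ j, 0 < g j x}

lemma isPolyhedralCell_iff {C : Set W} : IsPolyhedralCell C ↔ C.Nonempty ∧
    ∃ (p q : ℕ) (f : Fin p → W →ᵃ[ℝ] ℝ) (g : Fin q → W →ᵃ[ℝ] ℝ), C = polyhedralSet f g :=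
  Iff.rfl

lemma preimage_polyhedralSet (φ : W' →ᵃ[ℝ] W) (f : ι → W →ᵃ[ℝ] ℝ) (g : κ → W →ᵃ[ℝ] ℝ) :
    φ ⁻¹' polyhedralSet f g = polyhedralSet (fun i => (f i).comp φ) (fun j => (g j).comp φ) :=
  rfl

lemma isPolyhedralCell_polyhedralSet [Finite ι] [Finite κ] {f : ι → W →ᵃ[ℝ] ℝ}
    {g : κ → W →ᵃ[ℝ] ℝ} (hne : (polyhedralSet f g).Nonempty) :
    IsPolyhedralCell (polyhedralSet f g) := by
  refine ⟨hne, Nat.card ι, Nat.card κ, f ∘ (Finite.equivFin ι).symm,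
    g ∘ (Finite.equivFin κ).symm, ?_⟩
  ext x
  simp only [polyhedralSet, mem_ofPred_eq, comp_apply,
    (Finite.equivFin ι).symm.forall_congr_right (q := fun i => f i x = 0),
    (Finite.equivFin κ).symm.forall_congr_right (q := fun j => 0 < g j x)]

lemma IsPolyhedralCell.preimage {C : Set W} (hC : IsPolyhedralCell C) (φ : W' →ᵃ[ℝ] W)
    (hne : (φ ⁻¹' C).Nonempty) : IsPolyhedralCell (φ ⁻¹' C) := by
  obtain ⟨-, p, q, f, g, rfl⟩ := isPolyhedralCell_iff.1 hC
  exact ⟨hne, p, q, fun i => (f i).comp φ, fun j => (g j).comp φ, rfl⟩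

lemma convex_polyhedralSet (f : ι → W →ᵃ[ℝ] ℝ) (g : κ → W →ᵃ[ℝ] ℝ) :
    Convex ℝ (polyhedralSet f g) := by
  have : polyhedralSet f g = (⋂ i, f i ⁻¹' {0}) ∩ ⋂ j, g j ⁻¹' Ioi 0 := by
    ext; simp [polyhedralSet]
  rw [this]
  exact (convex_iInter fun i => (convex_singleton 0).affine_preimage (f i)).inter
    (convex_iInter fun j => (convex_Ioi 0).affine_preimage (g j))

lemma isOpen_polyhedralSet {E : Type*} [NormedAddCommGroup E] [NormedSpace ℝ E]
    [FiniteDimensional ℝ E] [Finite κ] {f : ι → E →ᵃ[ℝ] ℝ} (g : κ → E →ᵃ[ℝ] ℝ)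
    (hf : ∀ i, (f i).linear = 0) : IsOpen (polyhedralSet f g) := by
  refine isOpen_iff_forall_mem_open.2 fun x hx =>
    ⟨{y | ∀ j, 0 < g j y}, fun y hy => ⟨fun i => ?_, hy⟩, ?_, hx.2⟩
  · rw [← hx.1 i, ← vsub_vadd y x, AffineMap.map_vadd, hf i, LinearMap.zero_apply, zero_vadd]
  · simp only [ofPred_forall]
    exact isOpen_iInter_of_finite fun j =>
      isOpen_lt continuous_const (g j).continuous_of_finiteDimensional

lemma direction_affineSpan_polyhedralSet [Finite κ] (f : ι → W →ᵃ[ℝ] ℝ) (g : κ → W →ᵃ[ℝ] ℝ)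
    (hne : (polyhedralSet f g).Nonempty) :
    (affineSpan ℝ (polyhedralSet f g)).direction = ⨅ i, LinearMap.ker (f i).linear := by
  rw [direction_affineSpan]
  apply le_antisymm
  · refine Submodule.span_le.2 ?_
    rintro _ ⟨u, hu, w, hw, rfl⟩
    simp only [SetLike.mem_coe, Submodule.mem_iInf, LinearMap.mem_ker, AffineMap.linearMap_vsub,
      hu.1, hw.1, vsub_self, implies_true]
  · intro v hv
    obtain ⟨x₀, hx₀⟩ := hne
    -- the line through `x₀` in direction `v` meets the cell in an open subset of `ℝ`
    let ℓ : ℝ →ᵃ[ℝ] W := AffineMap.lineMap x₀ (v +ᵥ x₀)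
    have hℓ : ∀ ε : ℝ, ℓ ε = ε • v +ᵥ x₀ := fun ε => by simp [ℓ, AffineMap.lineMap_apply]
    have hU : IsOpen (ℓ ⁻¹' polyhedralSet f g) := by
      rw [preimage_polyhedralSet]
      refine isOpen_polyhedralSet _ fun i => LinearMap.ext_ring ?_
      simp only [ℓ, AffineMap.comp_linear, AffineMap.lineMap_linear, vadd_vsub,
        LinearMap.comp_apply, LinearMap.smulRight_apply, LinearMap.id_apply, one_smul,
        LinearMap.zero_apply]
      exact (Submodule.mem_iInf _).1 hv i
    have h0 : (0 : ℝ) ∈ ℓ ⁻¹' polyhedralSet f g := by simpa [hℓ] using hx₀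
    obtain ⟨ε, hεU, hε0⟩ :=
      ((eventually_nhdsWithin_of_eventually_nhds (hU.mem_nhds h0)).and self_mem_nhdsWithin :
        ∀ᶠ ε in 𝓝[≠] (0 : ℝ), ε ∈ ℓ ⁻¹' polyhedralSet f g ∧ ε ≠ 0).exists
    have hεv : ε • v ∈ vectorSpan ℝ (polyhedralSet f g) := by
      simpa [hℓ] using vsub_mem_vectorSpan ℝ (hεU : ℓ ε ∈ _) hx₀
    exact (Submodule.smul_mem_iff _ hε0).1 hεv

lemma cellDim_image (φ : W →ᵃ[ℝ] W') (hφ : Injective φ) (s : Set W) :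
    cellDim (φ '' s) = cellDim s := by
  rw [cellDim, cellDim, ← AffineSubspace.map_span, AffineSubspace.map_direction]
  exact (LinearEquiv.finrank_eq
    (Submodule.equivMapOfInjective φ.linear (φ.linear_injective_iff.2 hφ) _)).symm

end Polyhedral

/-- Fourier–Motzkin elimination of one variable from a finite system of strict inequalities. -/
lemma exists_forall_pos_add_mul_iff {κ : Type*} [Finite κ] (a d : κ → ℝ) :
    (∃ t, ∀ j, 0 < a j + t * d j) ↔
      (∀ j, d j = 0 → 0 < a j) ∧ ∀ j k, 0 < d j → d k < 0 → 0 < d j * a k - d k * a j := by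
  constructor
  · rintro ⟨t, ht⟩
    exact ⟨fun j hj => by simpa [hj] using ht j, fun j k hj hk => by
      nlinarith [mul_pos hj (ht k), mul_pos (neg_pos.2 hk) (ht j)]⟩
  · rintro ⟨hzero, hpair⟩
    obtain ⟨t, hlow, hup⟩ := (finite_range fun j : {j // 0 < d j} => -a j / d j).exists_between'
      (finite_range fun k : {k // d k < 0} => a k / -d k) (by
        rintro _ ⟨⟨j, hj⟩, rfl⟩ _ ⟨⟨k, hk⟩, rfl⟩
        rw [div_lt_div_iff₀ hj (neg_pos.2 hk)]
        linarith [hpair j k hj hk])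
    refine ⟨t, fun j => ?_⟩
    rcases lt_trichotomy (d j) 0 with hj | hj | hj
    · have := (lt_div_iff₀ (neg_pos.2 hj)).1 (hup _ ⟨⟨j, hj⟩, rfl⟩)
      linarith
    · simpa [hj] using hzero j hj
    · have := (div_lt_iff₀ hj).1 (hlow _ ⟨⟨j, hj⟩, rfl⟩)
      linarith

lemma finrank_prod_top {M : Type*} [AddCommGroup M] [Module ℝ M] [FiniteDimensional ℝ M]
    (K : Submodule ℝ M) :
    Module.finrank ℝ (K.prod (⊤ : Submodule ℝ ℝ)) = Module.finrank ℝ K + 1 := by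
  let e : K.prod (⊤ : Submodule ℝ ℝ) ≃ₗ[ℝ] K × ℝ :=
    { toFun := fun x => (⟨x.1.1, x.2.1⟩, x.1.2)
      invFun := fun y => ⟨(y.1.1, y.2), ⟨y.1.2, trivial⟩⟩
      map_add' := fun _ _ => rfl
      map_smul' := fun _ _ => rfl
      left_inv := fun _ => rfl
      right_inv := fun _ => rfl }
  rw [e.finrank_eq, Module.finrank_prod, Module.finrank_self]

section Slice

variable {W : Type*} [AddCommGroup W] [Module ℝ W]

lemma AffineMap.apply_mk_eq (φ : W × ℝ →ᵃ[ℝ] ℝ) (y : W) (t : ℝ) :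
    φ (y, t) = φ (y, 0) + t * φ.linear (0, 1) := by
  have : ((y, t) : W × ℝ) = t • ((0 : W), (1 : ℝ)) +ᵥ (y, (0 : ℝ)) := by simp
  rw [this, φ.map_vadd, map_smul, smul_eq_mul, vadd_eq_add, add_comm]

lemma IsPolyhedralCell.slice_of_subset_graph {C : Set (W × ℝ)} (hC : IsPolyhedralCell C)
    (α : W →ᵃ[ℝ] ℝ) (hα : ∀ y t, (y, t) ∈ C → t = α y) :
    IsPolyhedralCell (Prod.fst '' C) ∧ cellDim (Prod.fst '' C) = cellDim C ∧
      ∀ y ∈ Prod.fst '' C, Prod.mk y ⁻¹' C = {α y} := by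
  let ψ : W →ᵃ[ℝ] W × ℝ := (AffineMap.id ℝ W).prod α
  have hψ : ∀ y, ψ y = (y, α y) := fun _ => rfl
  have hfst : Prod.fst '' C = ψ ⁻¹' C := by
    ext y
    refine ⟨?_, fun h => ⟨ψ y, h, rfl⟩⟩
    rintro ⟨⟨y, t⟩, h, rfl⟩
    rwa [mem_preimage, hψ, ← hα y t h]
  have hgraph : C = ψ '' (Prod.fst '' C) := by
    ext ⟨y, t⟩
    refine ⟨fun h => ⟨y, ⟨_, h, rfl⟩, by rw [hψ, ← hα y t h]⟩, ?_⟩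
    rintro ⟨y', hy', h⟩
    rw [← h]
    rwa [hfst] at hy'
  refine ⟨hfst ▸ hC.preimage ψ (hfst ▸ hC.1.image _), ?_, fun y hy => ?_⟩
  · conv_rhs => rw [hgraph]
    exact (cellDim_image ψ (fun a b h => congrArg Prod.fst h) _).symm
  · ext t
    refine ⟨hα y t, fun ht => ?_⟩
    rw [mem_singleton_iff.1 ht]
    rwa [hfst] at hy

variable {ι : Type*} {κ : Type u} {f : ι → W × ℝ →ᵃ[ℝ] ℝ} {g : κ → W × ℝ →ᵃ[ℝ] ℝ}

def verticalLine (y : W) : ℝ →ᵃ[ℝ] W × ℝ := (AffineMap.const ℝ ℝ y).prod (AffineMap.id ℝ ℝ)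

abbrev horizontal : W →ᵃ[ℝ] W × ℝ := (LinearMap.inl ℝ W ℝ).toAffineMap

lemma convex_preimage_mk {C : Set (W × ℝ)} (hC : IsPolyhedralCell C) (y : W) :
    Convex ℝ (Prod.mk y ⁻¹' C) := by
  obtain ⟨-, p, q, f, g, rfl⟩ := isPolyhedralCell_iff.1 hC
  exact (convex_polyhedralSet f g).affine_preimage (verticalLine y)

variable (hf : ∀ i, (f i).linear (0, 1) = 0)
include hf

lemma isOpen_preimage_mk_polyhedralSet [Finite κ] (y : W) :
    IsOpen (Prod.mk y ⁻¹' polyhedralSet f g) := by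
  change IsOpen (verticalLine y ⁻¹' _)
  rw [preimage_polyhedralSet]
  exact isOpen_polyhedralSet _ fun i => LinearMap.ext_ring (by simpa [verticalLine] using hf i)

lemma mk_mem_polyhedralSet_iff (y : W) (t : ℝ) : (y, t) ∈ polyhedralSet f g ↔
    (∀ i, f i (y, 0) = 0) ∧ ∀ j, 0 < g j (y, 0) + t * (g j).linear (0, 1) := by
  simp only [polyhedralSet, mem_ofPred_eq, AffineMap.apply_mk_eq (f _) y t, hf, mul_zero,
    add_zero, AffineMap.apply_mk_eq (g _) y t]

/-- The constraints `g'` are those of `g` not involving the last coordinate, together with the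
pairwise eliminations of the last coordinate. -/
lemma exists_image_fst_polyhedralSet_eq [Finite κ] :
    ∃ (κ' : Type u) (_ : Finite κ') (g' : κ' → W →ᵃ[ℝ] ℝ),
      Prod.fst '' polyhedralSet f g = polyhedralSet (fun i => (f i).comp horizontal) g' := by
  let d j := (g j).linear (0, 1)
  refine ⟨{j // d j = 0} ⊕ {jk : κ × κ // 0 < d jk.1 ∧ d jk.2 < 0}, inferInstance,
    Sum.elim (fun j => (g j).comp horizontal)
      (fun jk => d jk.1.1 • (g jk.1.2).comp horizontal - d jk.1.2 • (g jk.1.1).comp horizontal),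
    ?_⟩
  ext y
  have hfst : y ∈ Prod.fst '' polyhedralSet f g ↔ ∃ t, (y, t) ∈ polyhedralSet f g :=
    ⟨fun ⟨⟨_, t⟩, h, e⟩ => ⟨t, e ▸ h⟩, fun ⟨t, h⟩ => ⟨_, h, rfl⟩⟩
  simp only [hfst, mk_mem_polyhedralSet_iff hf, exists_and_left]
  rw [exists_forall_pos_add_mul_iff (fun j => g j (y, 0))]
  simp [polyhedralSet, d, Sum.forall]

lemma cellDim_polyhedralSet_eq_succ [FiniteDimensional ℝ W] [Finite κ] {κ' : Type*} [Finite κ']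
    {g' : κ' → W →ᵃ[ℝ] ℝ} (hne : (polyhedralSet f g).Nonempty)
    (hne' : (polyhedralSet (fun i => (f i).comp horizontal) g').Nonempty) :
    cellDim (polyhedralSet f g) =
      cellDim (polyhedralSet (fun i => (f i).comp horizontal) g') + 1 := by
  rw [cellDim, cellDim, direction_affineSpan_polyhedralSet _ _ hne,
    direction_affineSpan_polyhedralSet _ _ hne', ← finrank_prod_top]
  suffices h : ⨅ i, LinearMap.ker (f i).linear =
      (⨅ i, LinearMap.ker ((f i).comp horizontal).linear).prod ⊤ by rw [h]
  ext ⟨v, s⟩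
  have hv : ∀ i, (f i).linear (v, s) = (f i).linear (v, 0) := fun i => by
    rw [show ((v, s) : W × ℝ) = (v, (0 : ℝ)) + s • ((0 : W), (1 : ℝ)) by simp, map_add,
      map_smul, hf, smul_zero, add_zero]
  simp [Submodule.mem_iInf, hv]

end Slice

theorem IsPolyhedralCell.exists_lineEulerInt_slice {W : Type*} [AddCommGroup W] [Module ℝ W]
    [FiniteDimensional ℝ W] {C : Set (W × ℝ)} (hC : IsPolyhedralCell C) :
    ∃ ε : ℤ, IsPolyhedralCell (Prod.fst '' C) ∧
      ε * (-1) ^ cellDim (Prod.fst '' C) = (-1) ^ cellDim C ∧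
      ∀ y ∈ Prod.fst '' C,
        ind (Prod.mk y ⁻¹' C) ∈ tameFunctions ∧ lineEulerInt (ind (Prod.mk y ⁻¹' C)) = ε := by
  obtain ⟨hne, p, q, f, g, rfl⟩ := isPolyhedralCell_iff.1 hC
  by_cases hvert : ∀ i, (f i).linear (0, 1) = 0
  · obtain ⟨κ', _, g', himg⟩ := exists_image_fst_polyhedralSet_eq hvert (g := g)
    have hne' := himg ▸ hne.image Prod.fst
    refine ⟨-1, himg ▸ isPolyhedralCell_polyhedralSet hne', ?_, fun y hy => ?_⟩
    · rw [himg, cellDim_polyhedralSet_eq_succ hvert hne hne', pow_succ]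
      ring
    · obtain ⟨⟨_, t⟩, ht, rfl⟩ := hy
      exact (isOpen_preimage_mk_polyhedralSet hvert _).lineEulerInt_ind
        (convex_preimage_mk hC _).isPreconnected ⟨t, ht⟩
  · obtain ⟨i₀, hi₀⟩ := not_forall.1 hvert
    -- the equation `f i₀ = 0` expresses the last coordinate as an affine function `α` of `y`
    let α : W →ᵃ[ℝ] ℝ := -((f i₀).linear (0, 1))⁻¹ • (f i₀).comp horizontal
    have hα : ∀ y t, (y, t) ∈ polyhedralSet f g → t = α y := fun y t h => by
      have := h.1 i₀
      rw [AffineMap.apply_mk_eq] at this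
      change t = -((f i₀).linear (0, 1))⁻¹ * f i₀ (y, 0)
      field_simp
      linear_combination this
    obtain ⟨hcell, hdim, hslice⟩ := hC.slice_of_subset_graph α hα
    refine ⟨1, hcell, by rw [hdim, one_mul], fun y hy => ?_⟩
    rw [hslice y hy]
    exact ⟨ind_singleton_mem_tameFunctions _, lineEulerInt_ind_singleton _⟩

section Fiber

variable {W : Type*}

noncomputable def fiberEulerInt (F : W × ℝ → ℤ) (y : W) : ℤ := lineEulerInt fun t => F (y, t)

lemma fiberEulerInt_add {F G : W × ℝ → ℤ} (hF : ∀ y, (fun t => F (y, t)) ∈ tameFunctions)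
    (hG : ∀ y, (fun t => G (y, t)) ∈ tameFunctions) :
    fiberEulerInt (F + G) = fiberEulerInt F + fiberEulerInt G :=
  funext fun y => lineEulerInt_add (hF y) (hG y)

lemma fiberEulerInt_ind {C : Set (W × ℝ)} {ε : ℤ} (h : ∀ y ∈ Prod.fst '' C,
      ind (Prod.mk y ⁻¹' C) ∈ tameFunctions ∧ lineEulerInt (ind (Prod.mk y ⁻¹' C)) = ε) :
    (∀ y, (fun t => ind C (y, t)) ∈ tameFunctions) ∧
      fiberEulerInt (ind C) = ε • ind (Prod.fst '' C) := by
  have hempty : ∀ y ∉ Prod.fst '' C, ind (Prod.mk y ⁻¹' C) = 0 := fun y hy => by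
    have : Prod.mk y ⁻¹' C = ∅ := eq_empty_of_forall_notMem fun t ht => hy ⟨(y, t), ht, rfl⟩
    rw [this, ind_empty]
  have hfib : ∀ y, fiberEulerInt (ind C) y = lineEulerInt (ind (Prod.mk y ⁻¹' C)) := fun _ => rfl
  refine ⟨fun y => ?_, funext fun y => ?_⟩ <;> by_cases hy : y ∈ Prod.fst '' C
  · exact (h y hy).1
  · change ind (Prod.mk y ⁻¹' C) ∈ tameFunctions
    exact (hempty y hy).symm ▸ zero_mem tameFunctions
  · simp [hfib, (h y hy).2, ind_apply_of_mem hy]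
  · simp [hfib, hempty y hy, ind_apply_of_notMem hy, lineEulerInt_zero]

variable [AddCommGroup W] [Module ℝ W]

variable (W) in
def fiberIntegrable : AddSubgroup (W × ℝ → ℤ) where
  carrier := {F | (∀ y, (fun t => F (y, t)) ∈ tameFunctions) ∧ fiberEulerInt F ∈ PolF W}
  zero_mem' := ⟨fun _ => zero_mem _, (funext fun _ => lineEulerInt_zero :
    fiberEulerInt (0 : W × ℝ → ℤ) = 0) ▸ zero_mem _⟩
  add_mem' := fun {F G} hF hG => ⟨fun y => add_mem (hF.1 y) (hG.1 y),
    fiberEulerInt_add hF.1 hG.1 ▸ add_mem hF.2 hG.2⟩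
  neg_mem' := fun {F} hF => ⟨fun y => neg_mem (hF.1 y), by
    have : fiberEulerInt (-F) = -fiberEulerInt F := funext fun y => lineEulerInt_neg (hF.1 y)
    exact this ▸ neg_mem hF.2⟩

theorem exists_isEulerHom_prod [FiniteDimensional ℝ W] (h : ∃ I : PolF W →+ ℤ, IsEulerHom I) :
    ∃ I : PolF (W × ℝ) →+ ℤ, IsEulerHom I := by
  obtain ⟨E, hE⟩ := h
  have hle : PolF (W × ℝ) ≤ fiberIntegrable W := by
    refine (AddSubgroup.closure_le _).2 ?_
    rintro _ ⟨C, hC, rfl⟩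
    obtain ⟨ε, hcell, -, hslice⟩ := hC.exists_lineEulerInt_slice
    obtain ⟨htame, hint⟩ := fiberEulerInt_ind hslice
    exact ⟨htame, hint ▸ zsmul_mem (ind_mem_PolF hcell) ε⟩
  let P : PolF (W × ℝ) →+ PolF W := AddMonoidHom.mk' (fun F => ⟨fiberEulerInt F, (hle F.2).2⟩)
    fun F G => Subtype.ext (fiberEulerInt_add (hle F.2).1 (hle G.2).1)
  refine ⟨E.comp P, fun C hC => ?_⟩
  obtain ⟨ε, hcell, hdim, hslice⟩ := hC.exists_lineEulerInt_slice
  have hP : P ⟨ind C, ind_mem_PolF hC⟩ = ε • ⟨ind (Prod.fst '' C), ind_mem_PolF hcell⟩ :=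
    Subtype.ext (fiberEulerInt_ind hslice).2
  rw [AddMonoidHom.comp_apply, hP, map_zsmul, hE _ hcell, smul_eq_mul, hdim]

end Fiber

section Assembly

variable {W W' : Type*} [AddCommGroup W] [Module ℝ W] [AddCommGroup W'] [Module ℝ W']

lemma comp_mem_PolF (φ : W' →ᵃ[ℝ] W) {F : W → ℤ} (hF : F ∈ PolF W) : F ∘ φ ∈ PolF W' := by
  induction hF using AddSubgroup.closure_induction with
  | mem _ hF =>
    obtain ⟨C, hC, rfl⟩ := hF
    change ind (φ ⁻¹' C) ∈ PolF W'
    rcases (φ ⁻¹' C).eq_empty_or_nonempty with h | h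
    · rw [h, ind_empty]
      exact zero_mem _
    · exact ind_mem_PolF (hC.preimage φ h)
  | zero => exact zero_mem _
  | add _ _ _ _ hF hG => exact add_mem hF hG
  | neg _ _ hF => exact neg_mem hF

lemma exists_isEulerHom_of_linearEquiv (e : W ≃ₗ[ℝ] W')
    (h : ∃ I : PolF W' →+ ℤ, IsEulerHom I) : ∃ I : PolF W →+ ℤ, IsEulerHom I := by
  obtain ⟨E, hE⟩ := h
  let φ : W' →ᵃ[ℝ] W := e.symm.toLinearMap.toAffineMap
  let P : PolF W →+ PolF W' :=
    AddMonoidHom.mk' (fun F => ⟨F.1 ∘ φ, comp_mem_PolF φ F.2⟩) fun _ _ => rfl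
  refine ⟨E.comp P, fun C hC => ?_⟩
  have himage : φ ⁻¹' C = e '' C := (e.image_eq_preimage_symm C).symm
  have hcell : IsPolyhedralCell (φ ⁻¹' C) := hC.preimage φ (himage ▸ hC.1.image e)
  have hdim : cellDim (φ ⁻¹' C) = cellDim C :=
    himage ▸ cellDim_image e.toLinearMap.toAffineMap e.injective C
  exact (hE _ hcell).trans (congrArg _ hdim)

lemma exists_isEulerHom_of_subsingleton [Subsingleton W] : ∃ I : PolF W →+ ℤ, IsEulerHom I := by
  refine ⟨(Pi.evalAddMonoidHom (fun _ : W => ℤ) 0).comp (PolF W).subtype, fun C hC => ?_⟩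
  obtain ⟨x, hx⟩ := hC.1
  rw [cellDim, Module.finrank_zero_of_subsingleton, pow_zero]
  exact ind_apply_of_mem (Subsingleton.elim x 0 ▸ hx)

lemma exists_isEulerHom_fin (n : ℕ) : ∃ I : PolF (Fin n → ℝ) →+ ℤ, IsEulerHom I := by
  induction n with
  | zero => exact exists_isEulerHom_of_subsingleton
  | succ n ih =>
    exact exists_isEulerHom_of_linearEquiv (LinearEquiv.ofFinrankEq _ _ (by simp))
      (exists_isEulerHom_prod ih)

lemma IsEulerHom.ext {I J : PolF W →+ ℤ} (hI : IsEulerHom I) (hJ : IsEulerHom J) : I = J :=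
  AddMonoidHom.eq_of_eqOn_dense AddSubgroup.closure_closure_coe_preimage
    fun F ⟨C, hC, hF⟩ => by
      obtain rfl : F = ⟨ind C, ind_mem_PolF hC⟩ := Subtype.ext hF
      exact (hI C hC).trans (hJ C hC).symm

end Assembly

/-- For a finite-dimensional real vector space `V` there is a unique
group homomorphism `I : PolF V →+ ℤ` with `I (1_C) = (-1) ^ dim C` for every
polyhedral cell `C ⊆ V` (integration against Euler-characteristic measure). -/
theorem statement0 (V : Type*) [AddCommGroup V] [Module ℝ V] [FiniteDimensional ℝ V] :
    ∃! I : PolF V →+ ℤ, IsEulerHom I := by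
  obtain ⟨I, hI⟩ := exists_isEulerHom_of_linearEquiv
    (LinearEquiv.ofFinrankEq V (Fin (Module.finrank ℝ V) → ℝ) (by simp)) (exists_isEulerHom_fin _)
  exact ⟨I, hI, fun J hJ => hJ.ext hI⟩
end

section
/- Let V be a finite-dimensional real vector space and let σ ⊆ V be a pointed closed convex polyhedral cone, with dual cone σ^∨ = {ξ ∈ V* : ξ(x) ≥ 0 for all x ∈ σ}. Then for every ξ ∈ V*, I(1_{σ ∩ {x : ξ(x) ≤ 1}}) equals 1 if ξ lies in the topological interior of σ^∨, and equals 0 otherwise. (This is the formula FT(i_σ) = (−1)^{dim σ^∨} j_{σ^∨} for the Fourier–Sato transform of the standard indicator function of σ.) -/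
/-- A (closed convex) polyhedral cone: a finite intersection of closed linear
half-spaces `{x | 0 ≤ α x}` for linear functionals `α`. -/
def IsPolyhedralCone {W : Type*} [AddCommGroup W] [Module ℝ W] (σ : Set W) : Prop :=
  ∃ (p : ℕ) (α : Fin p → (W →ₗ[ℝ] ℝ)), σ = {x | ∀ i, 0 ≤ α i x}

/-!
Write `σ ∩ {ξ ≤ 1}` as a polyhedron `Q = {x | ∀ i, 0 ≤ f i x}`; its recession cone
`σ ∩ {ξ ≤ 0}` is pointed, and it is trivial exactly when `ξ` lies in the interior of `σ^∨`. So it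
suffices to show that a nonempty polyhedron with pointed recession cone has Euler integral `1` if
it is compact and `0` otherwise.

`Q` is partitioned into its open faces, which are cells. Sweep `Q` by the level sets of an affine
function `γ`. Between two consecutive critical values (endpoints of the `γ`-images of the faces)
every face meets the slab and each level in cells whose dimensions differ by one, so a slab and
its slices have opposite integrals. A compact `Q` is treated by induction on its dimension: its
slices are compact polyhedra of smaller dimension, hence have integral `1`, and the sweep
alternates slices and slabs, beginning and ending with a slice. An unbounded `Q` is cut, by a
functional positive on its recession cone and at a level above all critical values, into a
compact part (integral `1`) and a slab (integral `-1`).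
-/

open Set Module Filter Topology

namespace Polyhedral

theorem ind_eq_indicator {W : Type*} (A : Set W) : ind A = A.indicator 1 := by
  ext x
  simp [ind, Set.indicator]

theorem ind_empty {W : Type*} : ind (∅ : Set W) = 0 := by
  ext; simp [ind]

theorem ind_inter_preimage_union {W : Type*} (Q : Set W) (g : W → ℝ) {A B : Set ℝ}
    (h : Disjoint A B) :
    ind (Q ∩ g ⁻¹' (A ∪ B)) = ind (Q ∩ g ⁻¹' A) + ind (Q ∩ g ⁻¹' B) := by
  rw [preimage_union, inter_union_distrib_left, ind_eq_indicator, ind_eq_indicator,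
    ind_eq_indicator, indicator_union_of_disjoint]
  · rfl
  · exact (h.preimage g).mono inter_subset_right inter_subset_right

section EulerIntegral

variable {V : Type*} [AddCommGroup V] [Module ℝ V]

def HasEulerIntegral (I : PolF V →+ ℤ) (g : V → ℤ) (m : ℤ) : Prop :=
  ∃ h : g ∈ PolF V, I ⟨g, h⟩ = m

variable {I : PolF V →+ ℤ}

namespace HasEulerIntegral

theorem unique {g : V → ℤ} {m m' : ℤ} (h : HasEulerIntegral I g m)
    (h' : HasEulerIntegral I g m') : m = m' := by
  obtain ⟨_, rfl⟩ := h
  obtain ⟨_, rfl⟩ := h'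
  rfl

theorem zero : HasEulerIntegral I 0 0 := ⟨zero_mem _, map_zero I⟩

theorem add {g g' : V → ℤ} {m m' : ℤ} (h : HasEulerIntegral I g m)
    (h' : HasEulerIntegral I g' m') : HasEulerIntegral I (g + g') (m + m') := by
  obtain ⟨hg, rfl⟩ := h
  obtain ⟨hg', rfl⟩ := h'
  exact ⟨add_mem hg hg', map_add I ⟨g, hg⟩ ⟨g', hg'⟩⟩

theorem sum {ι : Type*} (s : Finset ι) {g : ι → V → ℤ} {m : ι → ℤ}
    (h : ∀ i ∈ s, HasEulerIntegral I (g i) (m i)) :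
    HasEulerIntegral I (∑ i ∈ s, g i) (∑ i ∈ s, m i) := by
  classical
  induction s using Finset.induction_on with
  | empty => simpa using zero
  | insert a s has ih =>
    rw [Finset.sum_insert has, Finset.sum_insert has]
    exact (h a (s.mem_insert_self a)).add (ih fun i hi => h i (Finset.mem_insert_of_mem hi))

end HasEulerIntegral

theorem hasEulerIntegral_of_isPolyhedralCell (hI : IsEulerHom I) {C : Set V}
    (hC : IsPolyhedralCell C) : HasEulerIntegral I (ind C) ((-1) ^ cellDim C) :=
  ⟨ind_mem_PolF hC, hI C hC⟩

theorem hasEulerIntegral_ind_empty : HasEulerIntegral I (ind (∅ : Set V)) 0 := by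
  simpa only [ind_empty] using HasEulerIntegral.zero

end EulerIntegral

section Stratum

variable {V : Type*} [AddCommGroup V] [Module ℝ V] {I : PolF V →+ ℤ}
  {ιE ιP : Type*} {E : ιE → V →ᵃ[ℝ] ℝ} {P : ιP → V →ᵃ[ℝ] ℝ}

variable (E P) in
def stratum : Set V := {x | (∀ e, E e x = 0) ∧ ∀ p, 0 < P p x}

theorem convex_stratum : Convex ℝ (stratum E P) := by
  have h : stratum E P = (⋂ e, E e ⁻¹' {0}) ∩ ⋂ p, P p ⁻¹' Ioi 0 := by
    ext x
    simp [stratum]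
  rw [h]
  exact (convex_iInter fun e => (convex_singleton 0).affine_preimage (E e)).inter
    (convex_iInter fun p => (convex_Ioi 0).affine_preimage (P p))

theorem isPolyhedralCell_stratum [Finite ιE] [Finite ιP] (hne : (stratum E P).Nonempty) :
    IsPolyhedralCell (stratum E P) := by
  obtain ⟨p, ⟨eE⟩⟩ := Finite.exists_equiv_fin ιE
  obtain ⟨q, ⟨eP⟩⟩ := Finite.exists_equiv_fin ιP
  refine ⟨hne, p, q, E ∘ eE.symm, P ∘ eP.symm, ?_⟩
  ext x
  exact and_congr eE.symm.forall_congr_right.symm eP.symm.forall_congr_right.symm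

theorem vectorSpan_stratum [Finite ιP] (hne : (stratum E P).Nonempty) :
    vectorSpan ℝ (stratum E P) = ⨅ e, LinearMap.ker (E e).linear := by
  obtain ⟨u, hu⟩ := hne
  apply le_antisymm
  · rw [vectorSpan_def, Submodule.span_le]
    rintro _ ⟨x, hx, y, hy, rfl⟩
    simp only [SetLike.mem_coe, Submodule.mem_iInf, LinearMap.mem_ker, AffineMap.linearMap_vsub,
      hx.1, hy.1, vsub_self, implies_true]
  · intro v hv
    simp only [Submodule.mem_iInf, LinearMap.mem_ker] at hv
    -- `t • v +ᵥ u` stays in the stratum for all small `t ≠ 0`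
    have hP : ∀ p, ∀ᶠ t in 𝓝 (0 : ℝ), 0 < P p (t • v +ᵥ u) := fun p => by
      have hcont : Continuous fun t : ℝ => t * (P p).linear v + P p u := by fun_prop
      filter_upwards [hcont.tendsto 0 |>.eventually (lt_mem_nhds (by simpa using hu.2 p))]
        with t ht
      rwa [AffineMap.map_vadd, map_smul, smul_eq_mul, vadd_eq_add]
    obtain ⟨t, ht, ht0⟩ := ((eventually_all.2 hP).filter_mono nhdsWithin_le_nhds |>.and
      (self_mem_nhdsWithin : {0}ᶜ ∈ 𝓝[≠] (0 : ℝ))).exists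
    have hmem : t • v +ᵥ u ∈ stratum E P := ⟨fun e => by
      rw [AffineMap.map_vadd, map_smul, hv e, hu.1 e, smul_zero, vadd_eq_add, add_zero], ht⟩
    have htv : t • v ∈ vectorSpan ℝ (stratum E P) := by
      simpa using vsub_mem_vectorSpan ℝ hmem hu
    simpa [smul_smul, inv_mul_cancel₀ ht0] using Submodule.smul_mem _ t⁻¹ htv

theorem hasEulerIntegral_stratum (hI : IsEulerHom I) [Finite ιE] [Finite ιP]
    (hne : (stratum E P).Nonempty) :
    HasEulerIntegral I (ind (stratum E P))
      ((-1) ^ finrank ℝ ↥(⨅ e, LinearMap.ker (E e).linear)) := by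
  have h := hasEulerIntegral_of_isPolyhedralCell hI (isPolyhedralCell_stratum hne)
  rwa [cellDim, direction_affineSpan, vectorSpan_stratum hne] at h

theorem finrank_inf_ker_add_one [FiniteDimensional ℝ V] {K : Submodule ℝ V} {φ : V →ₗ[ℝ] ℝ}
    {w : V} (hw : w ∈ K) (hφ : φ w ≠ 0) :
    finrank ℝ ↥(K ⊓ LinearMap.ker φ) + 1 = finrank ℝ K := by
  have hne : φ.domRestrict K ≠ 0 := fun h => hφ (by simpa using LinearMap.congr_fun h ⟨w, hw⟩)
  rw [← Module.Dual.finrank_ker_add_one_of_ne_zero hne, LinearMap.ker_domRestrict,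
    ← (Submodule.comapSubtypeEquivOfLe (inf_le_left : K ⊓ LinearMap.ker φ ≤ K)).finrank_eq,
    Submodule.comap_inf, Submodule.comap_subtype_self, top_inf_eq]

/-- Cutting a stratum by an open window `J` keeps its dimension, while cutting it by a level
`c ∈ J` lowers the dimension by one, provided `γ` takes every value of `J` on the stratum. -/
theorem exists_hasEulerIntegral_stratum_window [FiniteDimensional ℝ V] (hI : IsEulerHom I)
    [Finite ιE] [Finite ιP] {κ : Type*} [Finite κ] (γ : V →ᵃ[ℝ] ℝ) {J : Set ℝ}
    (w : κ → V →ᵃ[ℝ] ℝ) (hw : γ ⁻¹' J = {x | ∀ k, 0 < w k x}) {c c' : ℝ} (hc : c ∈ J)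
    (hc' : c' ∈ J) (hcc' : c ≠ c')
    (hJ : (stratum E P ∩ γ ⁻¹' J).Nonempty → J ⊆ γ '' stratum E P) :
    ∃ e, HasEulerIntegral I (ind (stratum E P ∩ γ ⁻¹' J)) e ∧
      HasEulerIntegral I (ind (stratum E P ∩ γ ⁻¹' {c})) (-e) := by
  by_cases hne : (stratum E P ∩ γ ⁻¹' J).Nonempty
  swap
  · have hslice : stratum E P ∩ γ ⁻¹' {c} = ∅ := subset_empty_iff.1 fun x ⟨hx, hxc⟩ =>
      hne ⟨x, hx, mem_preimage.2 ((mem_singleton_iff.1 hxc).symm ▸ hc)⟩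
    rw [not_nonempty_iff_eq_empty.1 hne, hslice]
    exact ⟨0, hasEulerIntegral_ind_empty, by rw [neg_zero]; exact hasEulerIntegral_ind_empty⟩
  obtain ⟨x, hx, rfl⟩ := hJ hne hc
  obtain ⟨x', hx', rfl⟩ := hJ hne hc'
  have hwindow : stratum E P ∩ γ ⁻¹' J = stratum E (Sum.elim P w) := by
    ext y
    simp [stratum, hw, Sum.forall, and_assoc]
  set E' := Sum.elim E fun _ : Unit => γ - AffineMap.const ℝ V (γ x)
  have hslice : stratum E P ∩ γ ⁻¹' {γ x} = stratum E' P := by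
    ext y
    simp [E', stratum, Sum.forall, sub_eq_zero, and_right_comm]
  have hK : ⨅ e, LinearMap.ker (E' e).linear =
      (⨅ e, LinearMap.ker (E e).linear) ⊓ LinearMap.ker γ.linear := by
    simp [E', iInf_sum]
  have hdim := finrank_inf_ker_add_one (K := ⨅ e, LinearMap.ker (E e).linear) (φ := γ.linear)
    (w := x' -ᵥ x) (by rw [← vectorSpan_stratum ⟨x, hx⟩]; exact vsub_mem_vectorSpan ℝ hx' hx)
    (by rwa [AffineMap.linearMap_vsub, vsub_eq_sub, sub_ne_zero, ne_comm])
  refine ⟨_, hwindow ▸ hasEulerIntegral_stratum hI (hwindow ▸ hne), ?_⟩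
  have h := hasEulerIntegral_stratum (I := I) hI (hslice ▸ ⟨x, hx, rfl⟩ : (stratum E' P).Nonempty)
  rw [hK, ← hslice] at h
  rwa [← hdim, pow_succ, mul_neg_one, neg_neg]

theorem isPolyhedralCell_singleton [FiniteDimensional ℝ V] (a : V) :
    IsPolyhedralCell ({a} : Set V) := by
  set b := Module.finBasis ℝ V
  have h : ({a} : Set V) = stratum
      (fun i => (b.coord i).toAffineMap - AffineMap.const ℝ V (b.coord i a)) Fin.elim0 := by
    ext x
    simp only [mem_singleton_iff, stratum, AffineMap.coe_sub, LinearMap.coe_toAffineMap,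
      AffineMap.coe_const, Pi.sub_apply, Function.const_apply, ← map_sub,
      b.forall_coord_eq_zero_iff, sub_eq_zero, IsEmpty.forall_iff, and_true, mem_ofPred_eq]
  rw [h]
  exact isPolyhedralCell_stratum (h ▸ singleton_nonempty a)

theorem hasEulerIntegral_singleton [FiniteDimensional ℝ V] (hI : IsEulerHom I) (a : V) :
    HasEulerIntegral I (ind {a}) 1 := by
  have h := hasEulerIntegral_of_isPolyhedralCell hI (isPolyhedralCell_singleton a)
  rwa [cellDim, direction_affineSpan, vectorSpan_singleton, finrank_bot, pow_zero] at h

theorem finrank_vectorSpan_inter_preimage_lt [FiniteDimensional ℝ V] {Q : Set V} {x y : V}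
    (hx : x ∈ Q) (hy : y ∈ Q) {γ : V →ᵃ[ℝ] ℝ} (hγ : γ x ≠ γ y) (c : ℝ) :
    finrank ℝ (vectorSpan ℝ (Q ∩ γ ⁻¹' {c})) < finrank ℝ (vectorSpan ℝ Q) := by
  refine Submodule.finrank_lt_finrank_of_lt (lt_of_le_of_lt
    (le_inf (vectorSpan_mono ℝ inter_subset_left) (b := LinearMap.ker γ.linear) ?_)
    (inf_lt_left.2 fun h => hγ ?_))
  · rw [vectorSpan_def, Submodule.span_le]
    rintro _ ⟨p, ⟨-, hp⟩, q, ⟨-, hq⟩, rfl⟩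
    rw [SetLike.mem_coe, LinearMap.mem_ker, AffineMap.linearMap_vsub, mem_singleton_iff.1 hp,
      mem_singleton_iff.1 hq, vsub_self]
  · have hxy := h (vsub_mem_vectorSpan ℝ hx hy)
    rwa [LinearMap.mem_ker, AffineMap.linearMap_vsub, vsub_eq_sub, sub_eq_zero] at hxy

end Stratum

section Faces

variable {V : Type*} [AddCommGroup V] [Module ℝ V] {I : PolF V →+ ℤ}
  {ι : Type*} {f : ι → V →ᵃ[ℝ] ℝ}

variable (f) in
def polyhedron : Set V := {x | ∀ i, 0 ≤ f i x}

variable (f) in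
def openFace (Z : Finset ι) : Set V :=
  stratum (fun i : Z => f i) (fun i : {i // i ∉ Z} => f i)

theorem mem_openFace {Z : Finset ι} {x : V} :
    x ∈ openFace f Z ↔ (∀ i ∈ Z, f i x = 0) ∧ ∀ i ∉ Z, 0 < f i x := by
  simp [openFace, stratum]

theorem openFace_subset_polyhedron (Z : Finset ι) : openFace f Z ⊆ polyhedron f := by
  intro x hx i
  rw [mem_openFace] at hx
  by_cases hi : i ∈ Z
  · exact (hx.1 i hi).ge
  · exact (hx.2 i hi).le

theorem eq_of_mem_openFace {Z Z' : Finset ι} {x : V} (hx : x ∈ openFace f Z)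
    (hx' : x ∈ openFace f Z') : Z = Z' := by
  rw [mem_openFace] at hx hx'
  ext i
  constructor <;> intro hi <;> by_contra hi'
  · exact (hx'.2 i hi').ne' (hx.1 i hi)
  · exact (hx.2 i hi').ne' (hx'.1 i hi)

variable [Fintype ι]

theorem exists_mem_openFace {x : V} (hx : x ∈ polyhedron f) : ∃ Z, x ∈ openFace f Z := by
  classical
  refine ⟨Finset.univ.filter fun i => f i x = 0, mem_openFace.2 ⟨fun i hi => ?_, fun i hi => ?_⟩⟩
  · exact (Finset.mem_filter.1 hi).2
  · exact (hx i).lt_of_ne' (by simpa using hi)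

theorem ind_polyhedron_inter (S : Set V) :
    ind (polyhedron f ∩ S) = ∑ Z, ind (openFace f Z ∩ S) := by
  have hcover : polyhedron f ∩ S = ⋃ Z ∈ (Finset.univ : Finset (Finset ι)), openFace f Z ∩ S := by
    ext x
    simp only [mem_inter_iff, Finset.mem_univ, iUnion_true, mem_iUnion]
    constructor
    · rintro ⟨hx, hxS⟩
      obtain ⟨Z, hZ⟩ := exists_mem_openFace hx
      exact ⟨Z, hZ, hxS⟩
    · rintro ⟨Z, hZ, hxS⟩
      exact ⟨openFace_subset_polyhedron Z hZ, hxS⟩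
  rw [hcover, ind_eq_indicator, Finset.indicator_biUnion]
  · ext x
    simp [ind_eq_indicator]
  · intro Z _ Z' _ hZZ'
    exact disjoint_left.2 fun x hx hx' => hZZ' (eq_of_mem_openFace hx.1 hx'.1)

open Classical in
variable (f) in
/-- When `γ` is unbounded on a face, `sInf` or `sSup` is a junk value, which only adds a
harmless extra critical value. -/
noncomputable def criticalValues (γ : V →ᵃ[ℝ] ℝ) : Finset ℝ :=
  (Finset.univ.filter fun Z => (openFace f Z).Nonempty).biUnion
    fun Z => {sInf (γ '' openFace f Z), sSup (γ '' openFace f Z)}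

theorem sInf_mem_criticalValues (γ : V →ᵃ[ℝ] ℝ) {Z : Finset ι} (hZ : (openFace f Z).Nonempty) :
    sInf (γ '' openFace f Z) ∈ criticalValues f γ := by
  classical
  simp only [criticalValues, Finset.mem_biUnion, Finset.mem_filter]
  exact ⟨Z, ⟨Finset.mem_univ Z, hZ⟩, by simp⟩

theorem sSup_mem_criticalValues (γ : V →ᵃ[ℝ] ℝ) {Z : Finset ι} (hZ : (openFace f Z).Nonempty) :
    sSup (γ '' openFace f Z) ∈ criticalValues f γ := by
  classical
  simp only [criticalValues, Finset.mem_biUnion, Finset.mem_filter]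
  exact ⟨Z, ⟨Finset.mem_univ Z, hZ⟩, by simp⟩

theorem mem_Icc_of_mem_criticalValues {γ : V →ᵃ[ℝ] ℝ} {m M : ℝ}
    (hγ : MapsTo γ (polyhedron f) (Icc m M)) {r : ℝ} (hr : r ∈ criticalValues f γ) :
    r ∈ Icc m M := by
  classical
  simp only [criticalValues, Finset.mem_biUnion, Finset.mem_filter, Finset.mem_insert,
    Finset.mem_singleton] at hr
  obtain ⟨Z, ⟨-, hne⟩, hr⟩ := hr
  have hsub : γ '' openFace f Z ⊆ Icc m M :=
    image_subset_iff.2 fun x hx => hγ (openFace_subset_polyhedron Z hx)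
  have hne' : (γ '' openFace f Z).Nonempty := hne.image γ
  rcases hr with rfl | rfl
  · exact ⟨le_csInf hne' fun y hy => (hsub hy).1,
      (csInf_le ⟨m, fun y hy => (hsub hy).1⟩ hne'.some_mem).trans (hsub hne'.some_mem).2⟩
  · exact ⟨(hsub hne'.some_mem).1.trans (le_csSup ⟨M, fun y hy => (hsub hy).2⟩ hne'.some_mem),
      csSup_le hne' fun y hy => (hsub hy).2⟩

/-- Leaving the image of the face, `J` would cross one of its endpoints, a critical value. -/
theorem subset_image_openFace {γ : V →ᵃ[ℝ] ℝ} {J : Set ℝ} (hJ : J.OrdConnected)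
    (hJT : ∀ r ∈ J, r ∉ criticalValues f γ) {Z : Finset ι} {y : ℝ} (hyJ : y ∈ J)
    (hyF : y ∈ γ '' openFace f Z) : J ⊆ γ '' openFace f Z := by
  set A := γ '' openFace f Z
  have hA : A.OrdConnected := convex_iff_ordConnected.1 (convex_stratum.affine_image γ)
  have hZ : (openFace f Z).Nonempty := (image_nonempty).1 ⟨y, hyF⟩
  intro w hwJ
  by_contra hwA
  rcases lt_or_gt_of_ne (show y ≠ w by rintro rfl; exact hwA hyF) with hyw | hwy
  · have hub : ∀ z ∈ A, z ≤ w := fun z hz =>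
      le_of_not_ge fun hwz => hwA (hA.out hyF hz ⟨hyw.le, hwz⟩)
    exact hJT _ (hJ.out hyJ hwJ ⟨le_csSup ⟨w, hub⟩ hyF, csSup_le ⟨y, hyF⟩ hub⟩)
      (sSup_mem_criticalValues γ hZ)
  · have hlb : ∀ z ∈ A, w ≤ z := fun z hz =>
      le_of_not_ge fun hzw => hwA (hA.out hz hyF ⟨hzw, hwy.le⟩)
    exact hJT _ (hJ.out hwJ hyJ ⟨le_csInf ⟨y, hyF⟩ hlb, csInf_le ⟨w, hlb⟩ hyF⟩)
      (sInf_mem_criticalValues γ hZ)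

theorem inter_preimage_Ioi_eq_empty {γ : V →ᵃ[ℝ] ℝ} (hbdd : BddAbove (γ '' polyhedron f)) {c : ℝ}
    (hT : ∀ r ∈ criticalValues f γ, r ≤ c) : polyhedron f ∩ γ ⁻¹' Ioi c = ∅ := by
  refine subset_empty_iff.1 fun x ⟨hx, hxc⟩ => ?_
  obtain ⟨Z, hZ⟩ := exists_mem_openFace hx
  have hsub := subset_image_openFace ordConnected_Ioi (fun r hr hrT => (hT r hrT).not_gt hr)
    hxc (mem_image_of_mem γ hZ)
  exact not_bddAbove_Ioi c (hbdd.mono (hsub.trans (image_mono (openFace_subset_polyhedron Z))))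

/-- Every face meeting the slab contributes to the slab and to each of its slices with opposite
signs. -/
theorem hasEulerIntegral_slab [FiniteDimensional ℝ V] (hI : IsEulerHom I) {γ : V →ᵃ[ℝ] ℝ}
    {J : Set ℝ} (hJ : J.OrdConnected) (hJT : ∀ r ∈ J, r ∉ criticalValues f γ) {κ : Type*}
    [Finite κ] (w : κ → V →ᵃ[ℝ] ℝ) (hw : γ ⁻¹' J = {x | ∀ k, 0 < w k x}) {c c' : ℝ}
    (hc : c ∈ J) (hc' : c' ∈ J) (hcc' : c ≠ c')
    (hslice : HasEulerIntegral I (ind (polyhedron f ∩ γ ⁻¹' {c})) 1) :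
    HasEulerIntegral I (ind (polyhedron f ∩ γ ⁻¹' J)) (-1) := by
  have hface : ∀ Z, ∃ e, HasEulerIntegral I (ind (openFace f Z ∩ γ ⁻¹' J)) e ∧
      HasEulerIntegral I (ind (openFace f Z ∩ γ ⁻¹' {c})) (-e) := fun Z =>
    exists_hasEulerIntegral_stratum_window hI γ w hw hc hc' hcc' fun ⟨x, hx, hxJ⟩ =>
      subset_image_openFace hJ hJT hxJ (mem_image_of_mem γ hx)
  choose e he using hface
  have hslab := HasEulerIntegral.sum Finset.univ fun Z _ => (he Z).1
  have hslice' := HasEulerIntegral.sum Finset.univ fun Z _ => (he Z).2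
  rw [← ind_polyhedron_inter] at hslab hslice'
  rw [Finset.sum_neg_distrib] at hslice'
  rwa [← neg_neg (∑ Z, e Z), ← hslice.unique hslice'] at hslab

end Faces

section Polyhedron

variable {V : Type*} [AddCommGroup V] [Module ℝ V] {ι : Type*} {f : ι → V →ᵃ[ℝ] ℝ}

variable (f) in
def recessionCone : Set V := {v | ∀ i, 0 ≤ (f i).linear v}

def IsPolyhedron (Q : Set V) : Prop :=
  ∃ (n : ℕ) (f : Fin n → V →ᵃ[ℝ] ℝ), Q = polyhedron f

theorem polyhedron_cons {n : ℕ} (g : V →ᵃ[ℝ] ℝ) (f : Fin n → V →ᵃ[ℝ] ℝ) :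
    polyhedron (Fin.cons g f : Fin (n + 1) → V →ᵃ[ℝ] ℝ) = {x | 0 ≤ g x} ∩ polyhedron f := by
  ext x
  simp [polyhedron, Fin.forall_fin_succ]

theorem recessionCone_cons {n : ℕ} (g : V →ᵃ[ℝ] ℝ) (f : Fin n → V →ᵃ[ℝ] ℝ) :
    recessionCone (Fin.cons g f : Fin (n + 1) → V →ᵃ[ℝ] ℝ) =
      {v | 0 ≤ g.linear v} ∩ recessionCone f := by
  ext v
  simp [recessionCone, Fin.forall_fin_succ]

theorem polyhedron_inter_preimage_Iic {n : ℕ} (f : Fin n → V →ᵃ[ℝ] ℝ) (γ : V →ᵃ[ℝ] ℝ) (b : ℝ) :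
    polyhedron f ∩ γ ⁻¹' Iic b =
      polyhedron (Fin.cons (AffineMap.const ℝ V b - γ) f : Fin (n + 1) → V →ᵃ[ℝ] ℝ) := by
  ext y
  simp [polyhedron_cons, and_comm]

theorem IsPolyhedron.inter_nonneg {Q : Set V} (hQ : IsPolyhedron Q) (g : V →ᵃ[ℝ] ℝ) :
    IsPolyhedron ({x | 0 ≤ g x} ∩ Q) := by
  obtain ⟨n, f, rfl⟩ := hQ
  exact ⟨n + 1, Fin.cons g f, (polyhedron_cons g f).symm⟩

theorem IsPolyhedron.inter_preimage_singleton {Q : Set V} (hQ : IsPolyhedron Q)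
    (γ : V →ᵃ[ℝ] ℝ) (c : ℝ) : IsPolyhedron (Q ∩ γ ⁻¹' {c}) := by
  convert (hQ.inter_nonneg (γ - AffineMap.const ℝ V c)).inter_nonneg
    (AffineMap.const ℝ V c - γ) using 1
  ext x
  simp only [mem_inter_iff, mem_preimage, mem_singleton_iff, mem_ofPred_eq, AffineMap.coe_sub,
    AffineMap.coe_const, Pi.sub_apply, Function.const_apply, sub_nonneg]
  constructor
  · rintro ⟨hx, rfl⟩
    exact ⟨le_rfl, le_rfl, hx⟩
  · rintro ⟨h₁, h₂, hx⟩
    exact ⟨hx, le_antisymm h₁ h₂⟩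

theorem polyhedron_eq_iInter : polyhedron f = ⋂ i, f i ⁻¹' Ici 0 := by
  ext x
  simp [polyhedron]

theorem convex_polyhedron : Convex ℝ (polyhedron f) := by
  rw [polyhedron_eq_iInter]
  exact convex_iInter fun i => (convex_Ici 0).affine_preimage (f i)

theorem add_smul_mem_polyhedron {x v : V} (hx : x ∈ polyhedron f) (hv : v ∈ recessionCone f)
    {t : ℝ} (ht : 0 ≤ t) : x + t • v ∈ polyhedron f := fun i => by
  rw [add_comm, ← vadd_eq_add, AffineMap.map_vadd, map_smul, smul_eq_mul, vadd_eq_add]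
  exact add_nonneg (mul_nonneg ht (hv i)) (hx i)

theorem sum_linear_pos_of_mem_recessionCone [Fintype ι]
    (hpointed : recessionCone f ∩ -recessionCone f ⊆ {0}) {v : V} (hv : v ∈ recessionCone f)
    (hv0 : v ≠ 0) : 0 < ∑ i, (f i).linear v := by
  refine (Finset.sum_nonneg fun i _ => hv i).lt_of_ne fun hsum => hv0 (hpointed ⟨hv, ?_⟩)
  have hzero := (Finset.sum_eq_zero_iff_of_nonneg fun i _ => hv i).1 hsum.symm
  intro i
  simp [hzero i (Finset.mem_univ i)]

def coneTruncation {p : ℕ} (α : Fin p → V →ₗ[ℝ] ℝ) (ξ : V →ₗ[ℝ] ℝ) : Fin (p + 1) → V →ᵃ[ℝ] ℝ :=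
  Fin.cons (AffineMap.const ℝ V 1 - ξ.toAffineMap) fun i => (α i).toAffineMap

theorem polyhedron_coneTruncation {p : ℕ} (α : Fin p → V →ₗ[ℝ] ℝ) (ξ : V →ₗ[ℝ] ℝ) :
    polyhedron (coneTruncation α ξ) = {x | ∀ i, 0 ≤ α i x} ∩ {x | ξ x ≤ 1} := by
  rw [coneTruncation, polyhedron_cons, inter_comm]
  ext x
  simp [polyhedron]

theorem recessionCone_coneTruncation {p : ℕ} (α : Fin p → V →ₗ[ℝ] ℝ) (ξ : V →ₗ[ℝ] ℝ) :
    recessionCone (coneTruncation α ξ) = {x | ∀ i, 0 ≤ α i x} ∩ {x | ξ x ≤ 0} := by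
  rw [coneTruncation, recessionCone_cons, inter_comm]
  ext v
  simp [recessionCone]

end Polyhedron

section Normed

variable {V : Type*} [NormedAddCommGroup V] [NormedSpace ℝ V] [FiniteDimensional ℝ V]
  {I : PolF V →+ ℤ} {ι : Type*} {f : ι → V →ᵃ[ℝ] ℝ}

theorem isClosed_polyhedron : IsClosed (polyhedron f) := by
  rw [polyhedron_eq_iInter]
  exact isClosed_iInter fun i => isClosed_Ici.preimage (f i).continuous_of_finiteDimensional

/-- Compare with the minimum of `g` on the unit sphere of `K`. -/
theorem exists_pos_mul_norm_le {K : Set V} (hK : IsClosed K)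
    (hsmul : ∀ x ∈ K, ∀ t : ℝ, 0 ≤ t → t • x ∈ K) {g : V → ℝ} (hg : Continuous g)
    (hhom : ∀ x, ∀ t : ℝ, 0 ≤ t → g (t • x) = t * g x) (hpos : ∀ x ∈ K, x ≠ 0 → 0 < g x) :
    ∃ δ > 0, ∀ x ∈ K, δ * ‖x‖ ≤ g x := by
  have hg0 : g 0 = 0 := by simpa using hhom 0 0 le_rfl
  have hnormalize : ∀ x ∈ K, x ≠ 0 → ‖x‖⁻¹ • x ∈ K ∩ Metric.sphere 0 1 := fun x hx hx0 =>
    ⟨hsmul x hx _ (inv_nonneg.2 (norm_nonneg x)), by simp [norm_smul, hx0]⟩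
  rcases (K ∩ Metric.sphere (0 : V) 1).eq_empty_or_nonempty with hS | hS
  · refine ⟨1, one_pos, fun x hx => ?_⟩
    obtain rfl : x = 0 := by
      by_contra hx0
      simpa [hS] using hnormalize x hx hx0
    simp [hg0]
  obtain ⟨u, hu, hmin⟩ :=
    ((isCompact_sphere (0 : V) 1).inter_left hK).exists_isMinOn hS hg.continuousOn
  refine ⟨g u, hpos u hu.1 (Metric.ne_of_mem_sphere hu.2 one_ne_zero), fun x hx => ?_⟩
  rcases eq_or_ne x 0 with rfl | hx0
  · simp [hg0]
  have h : g u ≤ ‖x‖⁻¹ * g x := by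
    simpa [hhom x _ (inv_nonneg.2 (norm_nonneg x))] using hmin (hnormalize x hx hx0)
  calc g u * ‖x‖ ≤ ‖x‖⁻¹ * g x * ‖x‖ := mul_le_mul_of_nonneg_right h (norm_nonneg x)
    _ = g x := by field_simp

/-- The total negative part of the linear parts of `f` is positive off the recession cone and
bounded on the polyhedron, which bounds the polyhedron. -/
theorem isCompact_polyhedron [Fintype ι] (hR : recessionCone f ⊆ {0}) :
    IsCompact (polyhedron f) := by
  set g : V → ℝ := fun x => ∑ i, max (-(f i).linear x) 0
  have hg : Continuous g := continuous_finsetSum _ fun i _ =>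
    (f i).linear.continuous_of_finiteDimensional.neg.max continuous_const
  have hhom : ∀ x, ∀ t : ℝ, 0 ≤ t → g (t • x) = t * g x := fun x t ht => by
    simp only [g, Finset.mul_sum, map_smul, smul_eq_mul, ← mul_neg, mul_max_of_nonneg _ _ ht,
      mul_zero]
  have hpos : ∀ x ∈ univ, x ≠ 0 → 0 < g x := fun x _ hx0 => by
    obtain ⟨i, hi⟩ : ∃ i, (f i).linear x < 0 := by
      by_contra! h
      exact hx0 (hR h)
    exact Finset.sum_pos' (fun i _ => le_max_right _ _)
      ⟨i, Finset.mem_univ i, lt_max_of_lt_left (neg_pos.2 hi)⟩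
  obtain ⟨δ, hδ, hδg⟩ :=
    exists_pos_mul_norm_le isClosed_univ (fun _ _ _ _ => mem_univ _) hg hhom hpos
  refine Metric.isCompact_of_isClosed_isBounded isClosed_polyhedron
    (isBounded_iff_forall_norm_le.2 ⟨(∑ i, max (f i 0) 0) / δ, fun x hx => ?_⟩)
  rw [le_div_iff₀ hδ, mul_comm]
  refine (hδg x trivial).trans (Finset.sum_le_sum fun i _ => max_le_max ?_ le_rfl)
  have hdecomp : f i x = (f i).linear x + f i 0 := by
    simpa using (f i).map_vadd 0 x
  linarith [hx i]

theorem isCompact_polyhedron_inter_preimage_Iic {n : ℕ} {f : Fin n → V →ᵃ[ℝ] ℝ}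
    {γ : V →ᵃ[ℝ] ℝ} (hγ : ∀ u ∈ recessionCone f, u ≠ 0 → 0 < γ.linear u) (b : ℝ) :
    IsCompact (polyhedron f ∩ γ ⁻¹' Iic b) := by
  rw [polyhedron_inter_preimage_Iic]
  refine isCompact_polyhedron fun u hu => ?_
  rw [recessionCone_cons] at hu
  by_contra hu0
  have := hγ u hu.2 hu0
  simp at hu
  linarith [hu.1]

end Normed

section Sweep

variable {V : Type*} [NormedAddCommGroup V] [NormedSpace ℝ V] [FiniteDimensional ℝ V]
  {I : PolF V →+ ℤ} {ι : Type*} [Fintype ι] {f : ι → V →ᵃ[ℝ] ℝ}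

theorem hasEulerIntegral_inter_preimage_Ici (hI : IsEulerHom I) {γ : V →ᵃ[ℝ] ℝ} {m M : ℝ}
    (hmM : γ '' polyhedron f = Icc m M)
    (hslice : ∀ c ∈ Icc m M, HasEulerIntegral I (ind (polyhedron f ∩ γ ⁻¹' {c})) 1)
    (n : ℕ) : ∀ c ∈ Icc m M, ((criticalValues f γ).filter (c < ·)).card = n →
      HasEulerIntegral I (ind (polyhedron f ∩ γ ⁻¹' Ici c)) 1 := by
  induction n using Nat.strong_induction_on with
  | _ n ih =>
  intro c hc hn
  rw [← Ioi_insert, insert_eq, ind_inter_preimage_union _ _ (B := Ioi c)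
    (disjoint_singleton_left.2 (lt_irrefl c))]
  by_cases hT : ((criticalValues f γ).filter (c < ·)).Nonempty
  swap
  · have hT' : ∀ r ∈ criticalValues f γ, r ≤ c := fun r hr =>
      not_lt.1 fun hcr => hT ⟨r, Finset.mem_filter.2 ⟨hr, hcr⟩⟩
    rw [inter_preimage_Ioi_eq_empty (hmM ▸ bddAbove_Icc) hT', ind_empty, add_zero]
    exact hslice c hc
  set t := ((criticalValues f γ).filter (c < ·)).min' hT
  obtain ⟨htT, hct⟩ := Finset.mem_filter.1 (Finset.min'_mem _ hT)
  have hwindow : ∀ r ∈ Ioo c t, r ∉ criticalValues f γ := fun r hr hrT =>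
    (Finset.min'_le _ r (Finset.mem_filter.2 ⟨hrT, hr.1⟩)).not_gt hr.2
  have htM := mem_Icc_of_mem_criticalValues (hmM ▸ mapsTo_image γ _) htT
  have hpre : γ ⁻¹' Ioo c t = {x | ∀ k, 0 < ![γ - AffineMap.const ℝ V c,
      AffineMap.const ℝ V t - γ] k x} := by
    ext x
    simp [Fin.forall_fin_two, sub_pos]
  have hslab := hasEulerIntegral_slab hI ordConnected_Ioo hwindow _ hpre
    (c := (c + t) / 2) (c' := (3 * c + t) / 4) ⟨by linarith, by linarith⟩
    ⟨by linarith, by linarith⟩ (by intro h; linarith)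
    (hslice _ ⟨by linarith [hc.1], by linarith [htM.2]⟩)
  have hcard : ((criticalValues f γ).filter (t < ·)).card < n := by
    rw [← hn]
    refine Finset.card_lt_card ((Finset.ssubset_iff_of_subset fun r hr => ?_).2
      ⟨t, Finset.min'_mem _ hT, by simp⟩)
    rw [Finset.mem_filter] at hr ⊢
    exact ⟨hr.1, hct.trans hr.2⟩
  have htail := ih _ hcard t ⟨hc.1.trans hct.le, htM.2⟩ rfl
  rw [← Ioo_union_Ici_eq_Ioi hct,
    ind_inter_preimage_union _ _ (disjoint_left.2 fun r hr hr' => hr.2.not_ge hr')]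
  simpa using (hslice c hc).add (hslab.add htail)

theorem hasEulerIntegral_one_of_sweep (hI : IsEulerHom I) (hc : IsCompact (polyhedron f))
    (hne : (polyhedron f).Nonempty) (γ : V →ᵃ[ℝ] ℝ)
    (hslice : ∀ c, (polyhedron f ∩ γ ⁻¹' {c}).Nonempty →
      HasEulerIntegral I (ind (polyhedron f ∩ γ ⁻¹' {c})) 1) :
    HasEulerIntegral I (ind (polyhedron f)) 1 := by
  obtain ⟨m, M, hmM⟩ : ∃ m M, γ '' polyhedron f = Icc m M :=
    ⟨_, _, eq_Icc_of_connected_compact ((convex_polyhedron.affine_image γ).isConnected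
      (hne.image γ)) (hc.image γ.continuous_of_finiteDimensional)⟩
  have hm : m ∈ Icc m M := left_mem_Icc.2 (nonempty_Icc.1 (hmM ▸ hne.image γ))
  have hsub : polyhedron f ⊆ γ ⁻¹' Ici m := fun x hx =>
    (hmM ▸ mem_image_of_mem γ hx : γ x ∈ Icc m M).1
  have h := hasEulerIntegral_inter_preimage_Ici hI hmM (fun c hc => hslice c ?_) _ m hm rfl
  · rwa [inter_eq_left.2 hsub] at h
  · rw [← hmM] at hc
    obtain ⟨x, hx, rfl⟩ := hc
    exact ⟨x, hx, rfl⟩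

theorem hasEulerIntegral_one_of_isCompact (hI : IsEulerHom I) {Q : Set V} (hQ : IsPolyhedron Q)
    (hne : Q.Nonempty) (hc : IsCompact Q) : HasEulerIntegral I (ind Q) 1 := by
  induction hd : finrank ℝ (vectorSpan ℝ Q) using Nat.strong_induction_on generalizing Q with
  | _ d ih =>
  obtain ⟨x, hx⟩ := hne
  rcases eq_singleton_or_nontrivial hx with rfl | hQ₂
  · exact hasEulerIntegral_singleton hI x
  obtain ⟨y, hy, hyx⟩ := hQ₂.exists_ne x
  obtain ⟨φ, -, hφ⟩ := exists_dual_vector ℝ (y - x) (norm_ne_zero_iff.2 (sub_ne_zero.2 hyx))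
  set γ : V →ᵃ[ℝ] ℝ := (φ : V →ₗ[ℝ] ℝ).toAffineMap
  have hγ : γ y ≠ γ x := by
    have h : φ (y - x) ≠ 0 := by simpa [hφ] using sub_ne_zero.2 hyx
    simpa [γ, sub_eq_zero] using h
  obtain ⟨n, f, rfl⟩ := hQ
  refine hasEulerIntegral_one_of_sweep hI hc ⟨x, hx⟩ γ fun c hcne =>
    ih _ ?_ (IsPolyhedron.inter_preimage_singleton ⟨n, f, rfl⟩ γ c) hcne
      (hc.inter_right (isClosed_singleton.preimage γ.continuous_of_finiteDimensional)) rfl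
  exact hd ▸ finrank_vectorSpan_inter_preimage_lt hy hx hγ c

/-- Sweep by a functional `γ` positive on the recession cone: below a level `b` beyond all
critical values the polyhedron is compact, above `b` it is a slab. -/
theorem hasEulerIntegral_zero_of_not_recessionCone_subset (hI : IsEulerHom I) {n : ℕ}
    {f : Fin n → V →ᵃ[ℝ] ℝ} (hne : (polyhedron f).Nonempty)
    (hpointed : recessionCone f ∩ -recessionCone f ⊆ {0}) (hR : ¬recessionCone f ⊆ {0}) :
    HasEulerIntegral I (ind (polyhedron f)) 0 := by
  obtain ⟨x, hx⟩ := hne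
  obtain ⟨v, hv, hv0⟩ := not_subset.1 hR
  set φ : V →ₗ[ℝ] ℝ := ∑ i, (f i).linear
  have hφ : ∀ u ∈ recessionCone f, u ≠ 0 → 0 < φ u := fun u hu hu0 => by
    simpa [φ] using sum_linear_pos_of_mem_recessionCone hpointed hu hu0
  set γ : V →ᵃ[ℝ] ℝ := φ.toAffineMap
  have hcompact := isCompact_polyhedron_inter_preimage_Iic (γ := γ) hφ
  obtain ⟨b, hb⟩ := (insert (γ x) (criticalValues f γ)).exists_le
  have hlower : HasEulerIntegral I (ind (polyhedron f ∩ γ ⁻¹' Iic b)) 1 :=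
    hasEulerIntegral_one_of_isCompact hI ⟨_, _, polyhedron_inter_preimage_Iic f γ b⟩
      ⟨x, hx, hb _ (Finset.mem_insert_self _ _)⟩ (hcompact b)
  have hslice : HasEulerIntegral I (ind (polyhedron f ∩ γ ⁻¹' {b + 1})) 1 := by
    refine hasEulerIntegral_one_of_isCompact hI
      (IsPolyhedron.inter_preimage_singleton ⟨n, f, rfl⟩ γ _)
      ⟨x + ((b + 1 - γ x) / φ v) • v, add_smul_mem_polyhedron hx hv
        (div_nonneg (by linarith [hb _ (Finset.mem_insert_self _ _)]) (hφ v hv hv0).le), ?_⟩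
      ((hcompact (b + 1)).of_isClosed_subset
        (isClosed_polyhedron.inter (isClosed_singleton.preimage γ.continuous_of_finiteDimensional))
        (inter_subset_inter_right _ (preimage_mono (singleton_subset_iff.2 (mem_Iic.2 le_rfl)))))
    simp [γ, div_mul_cancel₀ _ (hφ v hv hv0).ne']
  have hupper := hasEulerIntegral_slab hI ordConnected_Ioi
    (fun r hr hrT => (hb r (Finset.mem_insert_of_mem hrT)).not_gt hr)
    (fun _ : Unit => γ - AffineMap.const ℝ V b) (by ext; simp [sub_pos])
    (c' := b + 2) (by simp) (by simp) (by simp) hslice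
  rw [← inter_univ (polyhedron f), ← preimage_univ (f := γ), ← Iic_union_Ioi (a := b),
    ind_inter_preimage_union _ _ (Iic_disjoint_Ioi le_rfl)]
  simpa using hlower.add hupper

end Sweep

section DualCone

variable {V : Type*} [NormedAddCommGroup V] [NormedSpace ℝ V] [FiniteDimensional ℝ V]

theorem mem_interior_dual_iff {σ : Set V} (hσ : IsClosed σ)
    (hsmul : ∀ x ∈ σ, ∀ t : ℝ, 0 ≤ t → t • x ∈ σ) {ξ : V →L[ℝ] ℝ} :
    ξ ∈ interior {η : V →L[ℝ] ℝ | ∀ x ∈ σ, 0 ≤ η x} ↔ ∀ x ∈ σ, x ≠ 0 → 0 < ξ x := by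
  constructor
  · intro hξ x hx hx0
    obtain ⟨φ, -, hφ⟩ := exists_dual_vector ℝ x (norm_ne_zero_iff.2 hx0)
    have hnear : ∀ᶠ t in 𝓝 (0 : ℝ), ∀ y ∈ σ, 0 ≤ (ξ - t • φ) y := by
      have hcont : Continuous fun t : ℝ => ξ - t • φ := by fun_prop
      exact (hcont.tendsto' 0 ξ (by simp)).eventually (mem_interior_iff_mem_nhds.1 hξ)
    obtain ⟨t, ht, htpos⟩ :=
      ((hnear.filter_mono nhdsWithin_le_nhds).and (self_mem_nhdsWithin (s := Ioi 0))).exists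
    have hξx := ht x hx
    simp only [sub_apply, smul_apply, smul_eq_mul, hφ, sub_nonneg] at hξx
    exact (mul_pos (mem_Ioi.1 htpos) (by simpa using hx0)).trans_le hξx
  · intro hpos
    obtain ⟨δ, hδ, hδξ⟩ := exists_pos_mul_norm_le hσ hsmul ξ.continuous
      (fun x t _ => by rw [map_smul, smul_eq_mul]) hpos
    refine mem_interior.2 ⟨Metric.ball ξ δ, fun η hη x hx => ?_, Metric.isOpen_ball,
      Metric.mem_ball_self hδ⟩
    have hdist : ‖ξ - η‖ < δ := by rwa [Metric.mem_ball, dist_comm, dist_eq_norm] at hη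
    have hdiff : (ξ - η) x ≤ ‖ξ - η‖ * ‖x‖ := (le_abs_self _).trans ((ξ - η).le_opNorm x)
    have := hδξ x hx
    rw [sub_apply] at hdiff
    nlinarith [mul_le_mul_of_nonneg_right hdist.le (norm_nonneg x)]

end DualCone

end Polyhedral

open Polyhedral

open Classical in
/-- `FT(i_σ) = (-1)^{dim σ^∨} j_{σ^∨}`: for a pointed closed polyhedral
cone `σ ⊆ V` with dual cone `σ^∨ ⊆ V*`, and any `ξ ∈ V*`, the Euler integral of the
indicator of `σ ∩ {x | ξ x ≤ 1}` is `1` if `ξ` lies in the interior of `σ^∨` and `0`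
otherwise. -/
theorem statement3 (V : Type*) [NormedAddCommGroup V] [NormedSpace ℝ V]
    [FiniteDimensional ℝ V]
    (I : PolF V →+ ℤ) (hI : IsEulerHom I)
    (σ : Set V) (hσ : IsPolyhedralCone σ) (hpointed : σ ∩ (-σ) = {0})
    (ξ : V →L[ℝ] ℝ) :
    ∃ hmem : ind (σ ∩ {x : V | ξ x ≤ 1}) ∈ PolF V,
      I ⟨ind (σ ∩ {x : V | ξ x ≤ 1}), hmem⟩ =
        if ξ ∈ interior {η : V →L[ℝ] ℝ | ∀ x ∈ σ, 0 ≤ η x} then 1 else 0 := by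
  obtain ⟨p, α, rfl⟩ := hσ
  set σ := {x : V | ∀ i, 0 ≤ α i x}
  set f := coneTruncation α ξ
  have hR : recessionCone f = σ ∩ {v | ξ v ≤ 0} := recessionCone_coneTruncation α ξ
  have hint : ξ ∈ interior {η : V →L[ℝ] ℝ | ∀ x ∈ σ, 0 ≤ η x} ↔ recessionCone f ⊆ {0} := by
    have hσ : IsClosed σ := isClosed_polyhedron (f := fun i => (α i).toAffineMap)
    rw [mem_interior_dual_iff hσ fun x hx t ht i => by simpa using mul_nonneg ht (hx i), hR]
    exact ⟨fun h v ⟨hv, hξv⟩ => by_contra fun hv0 => (h v hv hv0).not_ge hξv,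
      fun h x hx hx0 => lt_of_not_ge fun hξx => hx0 (h ⟨hx, hξx⟩)⟩
  have hpointed' : recessionCone f ∩ -recessionCone f ⊆ {0} := by
    rw [hR, ← hpointed]
    exact fun v hv => ⟨hv.1.1, hv.2.1⟩
  have hQ : σ ∩ {x | ξ x ≤ 1} = polyhedron f := (polyhedron_coneTruncation α ξ).symm
  have hne : (polyhedron f).Nonempty := hQ ▸ ⟨0, by simp [σ]⟩
  show HasEulerIntegral I _ _
  rw [hQ]
  split_ifs with h
  · exact hasEulerIntegral_one_of_isCompact hI ⟨_, f, rfl⟩ hne (isCompact_polyhedron (hint.1 h))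
  · exact hasEulerIntegral_zero_of_not_recessionCone_subset hI hne hpointed' (mt hint.2 h)
end

section
/- Let V be an n-dimensional real vector space, let σ ⊆ V be a pointed closed convex polyhedral cone with dual cone σ^∨ ⊆ V*, and let U be the topological interior of σ^∨ (which is nonempty since σ is pointed). Then for every v ∈ V, I(1_{U ∩ {ξ : ξ(v) ≤ 1}}) equals (−1)^n if v ∈ −σ, and equals 0 otherwise. (This is the formula FT(j_{σ^∨}) = i_{−σ} for the Fourier–Sato transform of the costandard indicator function of σ^∨.) -/
open Module Topology

namespace PointedCone

variable {𝕜 V : Type*} [Field 𝕜] [AddCommGroup V] [Module 𝕜 V]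

def kerCombination (β : V →ₗ[𝕜] 𝕜) : V →ₗ[𝕜] V →ₗ[𝕜] V :=
  LinearMap.mk₂ 𝕜 (fun s t => β s • t - β t • s)
    (fun _ _ _ => by simp only [map_add]; module)
    (fun _ _ _ => by simp only [map_smul, smul_eq_mul]; module)
    (fun _ _ _ => by simp only [map_add]; module)
    (fun _ _ _ => by simp only [map_smul, smul_eq_mul]; module)

@[simp] theorem kerCombination_apply (β : V →ₗ[𝕜] 𝕜) (s t : V) :
    kerCombination β s t = β s • t - β t • s := rfl

variable [LinearOrder 𝕜]

def fourierMotzkin (β : V →ₗ[𝕜] 𝕜) (S : Set V) : Set V :=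
  {s ∈ S | 0 ≤ β s} ∪ Set.image2 (kerCombination β · ·) {s ∈ S | 0 ≤ β s} {t ∈ S | β t < 0}

theorem _root_.Set.Finite.fourierMotzkin {S : Set V} (hS : S.Finite) (β : V →ₗ[𝕜] 𝕜) :
    (fourierMotzkin β S).Finite :=
  (hS.sep _).union ((hS.sep _).image2 _ (hS.sep _))

variable [IsStrictOrderedRing 𝕜]

theorem fg_top [Module.Finite 𝕜 V] : (⊤ : PointedCone 𝕜 V).FG := by
  obtain ⟨S, hS⟩ := Module.finite_def.mp ‹Module.Finite 𝕜 V›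
  refine Submodule.fg_def.mpr ⟨S ∪ -S, S.finite_toSet.union S.finite_toSet.neg, top_unique ?_⟩
  have : Submodule.span 𝕜 (S : Set V) ≤ (hull 𝕜 (S ∪ -S : Set V)).lineal :=
    Submodule.span_le.mpr fun s hs =>
      ⟨subset_hull (Or.inl hs), subset_hull (Or.inr (by simpa using hs))⟩
  rw [hS] at this
  exact fun x _ => lineal_le _ (this trivial)

theorem apply_mem_hull_image2 {M N P : Type*} [AddCommMonoid M] [Module 𝕜 M] [AddCommMonoid N]
    [Module 𝕜 N] [AddCommMonoid P] [Module 𝕜 P] (f : M →ₗ[𝕜] N →ₗ[𝕜] P) {S : Set M} {T : Set N}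
    {s : M} {t : N} (hs : s ∈ hull 𝕜 S) (ht : t ∈ hull 𝕜 T) :
    f s t ∈ hull 𝕜 (Set.image2 (f · ·) S T) := by
  have h := Submodule.apply_mem_map₂
    (f.restrictScalars₁₂ {c : 𝕜 // 0 ≤ c} {c : 𝕜 // 0 ≤ c}) hs ht
  rwa [Submodule.map₂_span_span] at h

theorem hull_le_comap_positive {β : V →ₗ[𝕜] 𝕜} {S : Set V} (hS : ∀ s ∈ S, 0 ≤ β s) :
    hull 𝕜 S ≤ (positive 𝕜 𝕜).comap β :=
  Submodule.span_le.mpr hS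

theorem eq_zero_of_mem_hull_of_map_eq_zero {β : V →ₗ[𝕜] 𝕜} {S : Set V}
    (hS : ∀ s ∈ S, 0 < β s) {x : V} (hx : x ∈ hull 𝕜 S) (h : β x = 0) : x = 0 := by
  suffices ∀ x ∈ hull 𝕜 S, 0 ≤ β x ∧ (β x = 0 → x = 0) from (this x hx).2 h
  intro x hx
  induction hx using Submodule.span_induction with
  | mem s hs => exact ⟨(hS s hs).le, fun h => absurd h (hS s hs).ne'⟩
  | zero => simp
  | add y z _ _ hy hz =>
    refine ⟨by rw [map_add]; exact add_nonneg hy.1 hz.1, fun h => ?_⟩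
    rw [map_add] at h
    rw [hy.2 (by linarith [hy.1, hz.1]), hz.2 (by linarith [hy.1, hz.1]), add_zero]
  | smul c y _ hy =>
    obtain ⟨c, hc⟩ := c
    simp only [Nonneg.mk_smul, map_smul, smul_eq_mul, mul_eq_zero]
    refine ⟨mul_nonneg hc hy.1, ?_⟩
    rintro (rfl | h)
    · exact zero_smul _ _
    · rw [hy.2 h, smul_zero]

theorem hull_fourierMotzkin (β : V →ₗ[𝕜] 𝕜) (S : Set V) :
    hull 𝕜 (fourierMotzkin β S) = hull 𝕜 S ⊓ (positive 𝕜 𝕜).comap β := by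
  set P := {s ∈ S | 0 ≤ β s}
  set N := {t ∈ S | β t < 0}
  refine le_antisymm (Submodule.span_le.mpr ?_) fun x hx => ?_
  · rintro _ (⟨hs, hβs⟩ | ⟨s, ⟨hs, hβs⟩, t, ⟨ht, hβt⟩, rfl⟩)
    · exact ⟨subset_hull hs, hβs⟩
    · refine ⟨?_, by simp [mul_comm]⟩
      show kerCombination β s t ∈ hull 𝕜 S
      rw [kerCombination_apply, sub_eq_add_neg, ← neg_smul]
      exact add_mem ((hull 𝕜 S).smul_mem hβs (subset_hull ht))
        ((hull 𝕜 S).smul_mem (by linarith) (subset_hull hs))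
  rw [Submodule.mem_inf] at hx
  obtain ⟨hxS, hx⟩ := hx
  have hSPN : hull 𝕜 S = hull 𝕜 P ⊔ hull 𝕜 N := by
    rw [← Submodule.span_union]
    congr 1
    ext s
    simp [P, N, ← and_or_left, le_or_gt]
  obtain ⟨p, hp, q, hq, rfl⟩ := Submodule.mem_sup.mp (hSPN ▸ hxS)
  have hβp : 0 ≤ β p := hull_le_comap_positive (fun s hs => hs.2) hp
  have hβq : β q ≤ 0 := by
    simpa using hull_le_comap_positive (β := -β) (fun t ht => by simpa using ht.2.le) hq
  have hPle : hull 𝕜 P ≤ hull 𝕜 (fourierMotzkin β S) := Submodule.span_mono Set.subset_union_left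
  have hx' : 0 ≤ β p + β q := by simpa using hx
  rcases hβp.eq_or_lt with hβp0 | hβp0
  · have hq0 : q = 0 := eq_zero_of_mem_hull_of_map_eq_zero (β := -β)
      (fun t ht => by simpa using ht.2) hq (by rw [LinearMap.neg_apply, neg_eq_zero]; linarith)
    rw [hq0, add_zero]
    exact hPle hp
  -- `0 ≤ β (p + q)` makes the coefficient of `p` nonnegative
  · have key : p + q = (1 + β q / β p) • p + (β p)⁻¹ • kerCombination β p q := by
      rw [kerCombination_apply, smul_sub, smul_smul, smul_smul, inv_mul_cancel₀ hβp0.ne']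
      module
    rw [key]
    refine add_mem ((hull 𝕜 _).smul_mem ?_ (hPle hp))
      ((hull 𝕜 _).smul_mem (inv_nonneg.mpr hβp0.le)
        (Submodule.span_mono Set.subset_union_right (apply_mem_hull_image2 _ hp hq)))
    simpa [add_div, hβp0.ne'] using div_nonneg hx' hβp0.le

theorem DualFG.fg [Module.Finite 𝕜 V] {M : Type*} [AddCommGroup M] [Module 𝕜 M]
    {p : M →ₗ[𝕜] V →ₗ[𝕜] 𝕜} {C : PointedCone 𝕜 V} (hC : C.DualFG p) : C.FG := by
  classical
  obtain ⟨A, rfl⟩ := hC.id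
  clear hC
  induction A using Finset.induction_on with
  | empty => simpa using fg_top
  | insert β A _ ih =>
    obtain ⟨S, hS, hSA⟩ := Submodule.fg_def.mp ih
    refine Submodule.fg_def.mpr ⟨_, hS.fourierMotzkin β, (hull_fourierMotzkin β S).trans ?_⟩
    rw [Finset.coe_insert, dual_insert, dual_singleton, ← hSA, inf_comm]
    rfl

end PointedCone

theorem ind_union_of_disjoint {W : Type*} {A B : Set W} (h : Disjoint A B) :
    ind (A ∪ B) = ind A + ind B := by
  ext x
  by_cases hA : x ∈ A
  · simp [ind, hA, h.notMem_of_mem_left hA]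
  · by_cases hB : x ∈ B <;> simp [ind, hA, hB]

section Cells

variable {W : Type*} [AddCommGroup W] [Module ℝ W]

theorem isPolyhedralCell_of_finite {ι κ : Type*} [Finite ι] [Finite κ]
    (f : ι → W →ᵃ[ℝ] ℝ) (g : κ → W →ᵃ[ℝ] ℝ)
    (hne : {x | (∀ i, f i x = 0) ∧ ∀ j, 0 < g j x}.Nonempty) :
    IsPolyhedralCell {x | (∀ i, f i x = 0) ∧ ∀ j, 0 < g j x} := by
  obtain ⟨p, ⟨e⟩⟩ := Finite.exists_equiv_fin ι
  obtain ⟨q, ⟨e'⟩⟩ := Finite.exists_equiv_fin κ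
  refine ⟨hne, p, q, f ∘ e.symm, g ∘ e'.symm, ?_⟩
  ext x
  simp [e.symm.forall_congr_left, e'.symm.forall_congr_left]

theorem IsPolyhedralCell.inter_lt {C : Set W} (hC : IsPolyhedralCell C) (ℓ : W →ₗ[ℝ] ℝ) (c : ℝ)
    (hne : (C ∩ {x | ℓ x < c}).Nonempty) : IsPolyhedralCell (C ∩ {x | ℓ x < c}) := by
  obtain ⟨-, p, q, f, g, rfl⟩ := hC
  have h : {x | (∀ i, f i x = 0) ∧ ∀ j, 0 < g j x} ∩ {x | ℓ x < c} =
      {x | (∀ i, f i x = 0) ∧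
        ∀ j : Option (Fin q), 0 < j.elim (AffineMap.const ℝ W c - ℓ.toAffineMap) g x} := by
    ext x
    simp only [Set.mem_inter_iff, Set.mem_ofPred_eq, Option.forall, Option.elim_none,
      Option.elim_some, AffineMap.coe_sub, AffineMap.coe_const, LinearMap.coe_toAffineMap,
      Pi.sub_apply, Function.const_apply, sub_pos]
    tauto
  rw [h] at hne ⊢
  exact isPolyhedralCell_of_finite _ _ hne

theorem IsPolyhedralCell.inter_eq {C : Set W} (hC : IsPolyhedralCell C) (ℓ : W →ₗ[ℝ] ℝ) (c : ℝ)
    (hne : (C ∩ {x | ℓ x = c}).Nonempty) : IsPolyhedralCell (C ∩ {x | ℓ x = c}) := by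
  obtain ⟨-, p, q, f, g, rfl⟩ := hC
  have h : {x | (∀ i, f i x = 0) ∧ ∀ j, 0 < g j x} ∩ {x | ℓ x = c} =
      {x | (∀ i : Option (Fin p), i.elim (ℓ.toAffineMap - AffineMap.const ℝ W c) f x = 0) ∧
        ∀ j, 0 < g j x} := by
    ext x
    simp only [Set.mem_inter_iff, Set.mem_ofPred_eq, Option.forall, Option.elim_none,
      Option.elim_some, AffineMap.coe_sub, AffineMap.coe_const, LinearMap.coe_toAffineMap,
      Pi.sub_apply, Function.const_apply, sub_eq_zero]
    tauto
  rw [h] at hne ⊢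
  exact isPolyhedralCell_of_finite _ _ hne

end Cells

section Dimension

variable {W : Type*} [NormedAddCommGroup W] [NormedSpace ℝ W]

theorem IsOpen.cellDim_eq {C : Set W} (hC : IsOpen C) (hne : C.Nonempty) :
    cellDim C = finrank ℝ W := by
  rw [cellDim, hC.affineSpan_eq_top hne, AffineSubspace.direction_top, finrank_top]

theorem IsOpen.cellDim_inter_hyperplane_add_one [FiniteDimensional ℝ W] {C : Set W}
    (hC : IsOpen C) {ℓ : W →ₗ[ℝ] ℝ} (hℓ : ℓ ≠ 0) {c : ℝ} (hne : (C ∩ {x | ℓ x = c}).Nonempty) :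
    cellDim (C ∩ {x | ℓ x = c}) + 1 = finrank ℝ W := by
  obtain ⟨x₀, hx₀C, hx₀⟩ := hne
  suffices (affineSpan ℝ (C ∩ {x | ℓ x = c})).direction = LinearMap.ker ℓ by
    rw [cellDim, this, Module.Dual.finrank_ker_add_one_of_ne_zero hℓ]
  refine le_antisymm ?_ fun w hw => ?_
  · have h : C ∩ {x | ℓ x = c} ⊆ AffineSubspace.mk' x₀ (LinearMap.ker ℓ) := fun x hx => by
      simp_all [AffineSubspace.mem_mk']
    simpa using AffineSubspace.direction_le (affineSpan_le.mpr h)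
  · have hnear : ∀ᶠ t : ℝ in 𝓝 0, x₀ + t • w ∈ C :=
      ((by fun_prop : Continuous fun t : ℝ => x₀ + t • w).tendsto' 0 x₀ (by simp)).eventually
        (hC.mem_nhds hx₀C)
    obtain ⟨t, htC, ht0⟩ := ((hnear.filter_mono nhdsWithin_le_nhds).and
      (self_mem_nhdsWithin (s := {0}ᶜ))).exists
    have h := AffineSubspace.vsub_mem_direction
      (subset_affineSpan ℝ (C ∩ {x | ℓ x = c}) ⟨htC, by simp_all⟩)
      (subset_affineSpan ℝ (C ∩ {x | ℓ x = c}) ⟨hx₀C, hx₀⟩)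
    rw [vsub_eq_sub, add_sub_cancel_left] at h
    exact (Submodule.smul_mem_iff _ ht0).mp h

end Dimension

section Euler

variable {W : Type*} [NormedAddCommGroup W] [NormedSpace ℝ W] {I : PolF W →+ ℤ}

theorem IsEulerHom.apply_ind_of_isOpen (hI : IsEulerHom I) {C : Set W} (hC : IsPolyhedralCell C)
    (ho : IsOpen C) : I ⟨ind C, ind_mem_PolF hC⟩ = (-1) ^ finrank ℝ W := by
  rw [hI C hC, ho.cellDim_eq hC.1]

theorem IsEulerHom.exists_apply_ind_inter_le_one_eq_zero [FiniteDimensional ℝ W]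
    (hI : IsEulerHom I) {U : Set W} (hU : IsPolyhedralCell U) (ho : IsOpen U)
    (hcone : ∀ t : ℝ, 0 < t → ∀ x ∈ U, t • x ∈ U) (ℓ : W →ₗ[ℝ] ℝ) (hpos : ∃ x ∈ U, 0 < ℓ x) :
    ∃ hmem : ind (U ∩ {x | ℓ x ≤ 1}) ∈ PolF W, I ⟨ind (U ∩ {x | ℓ x ≤ 1}), hmem⟩ = 0 := by
  obtain ⟨x₀, hx₀U, hx₀⟩ := hpos
  have hA : IsPolyhedralCell (U ∩ {x | ℓ x < 1}) :=
    hU.inter_lt ℓ 1 ⟨(2 * ℓ x₀)⁻¹ • x₀, hcone _ (by positivity) _ hx₀U, by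
      simp only [Set.mem_ofPred_eq, map_smul, smul_eq_mul]
      field_simp
      linarith⟩
  have hBne : (U ∩ {x | ℓ x = 1}).Nonempty :=
    ⟨(ℓ x₀)⁻¹ • x₀, hcone _ (by positivity) _ hx₀U, by simp [hx₀.ne']⟩
  have hB := hU.inter_eq ℓ 1 hBne
  have hAopen : IsOpen (U ∩ {x | ℓ x < 1}) :=
    ho.inter (isOpen_lt ℓ.continuous_of_finiteDimensional continuous_const)
  have hsplit : ind (U ∩ {x | ℓ x ≤ 1}) = ind (U ∩ {x | ℓ x < 1}) + ind (U ∩ {x | ℓ x = 1}) := by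
    rw [← ind_union_of_disjoint, ← Set.inter_union_distrib_left]
    · simp_rw [le_iff_lt_or_eq]; rfl
    · exact Set.disjoint_left.mpr fun x hA hB => hA.2.ne hB.2
  refine ⟨hsplit ▸ add_mem (ind_mem_PolF hA) (ind_mem_PolF hB), ?_⟩
  calc I ⟨ind (U ∩ {x | ℓ x ≤ 1}), _⟩ = I (⟨_, ind_mem_PolF hA⟩ + ⟨_, ind_mem_PolF hB⟩) :=
        congrArg I (Subtype.ext hsplit)
    _ = (-1) ^ (cellDim (U ∩ {x | ℓ x = 1}) + 1) + (-1) ^ cellDim (U ∩ {x | ℓ x = 1}) := by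
        rw [map_add, hI.apply_ind_of_isOpen hA hAopen, hI _ hB,
          ho.cellDim_inter_hyperplane_add_one (by rintro rfl; simp at hx₀) hBne]
    _ = 0 := by ring

end Euler

section DualCone

theorem IsPolyhedralCone.exists_finite_hull_eq {V : Type*} [AddCommGroup V] [Module ℝ V]
    [FiniteDimensional ℝ V] {σ : Set V} (hσ : IsPolyhedralCone σ) :
    ∃ S : Set V, S.Finite ∧ 0 ∉ S ∧ σ = PointedCone.hull ℝ S := by
  obtain ⟨p, α, rfl⟩ := hσ
  obtain ⟨S, hS, hSσ⟩ := Submodule.fg_def.mp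
    (PointedCone.DualFG.dual_of_finite .id (Set.finite_range α)).fg
  refine ⟨S \ {0}, hS.sdiff, fun h => h.2 rfl, ?_⟩
  rw [PointedCone.hull, Submodule.span_sdiff_singleton_zero, hSσ]
  ext x
  simp

theorem sum_pos_of_inter_neg_eq_singleton {V : Type*} [AddCommGroup V] [Module ℝ V] {p : ℕ}
    {α : Fin p → V →ₗ[ℝ] ℝ} (hpointed : {x | ∀ i, 0 ≤ α i x} ∩ -{x | ∀ i, 0 ≤ α i x} = {0})
    {x : V} (hx : ∀ i, 0 ≤ α i x) (hx0 : x ≠ 0) : 0 < ∑ i, α i x := by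
  refine (Finset.sum_nonneg fun i _ => hx i).lt_of_ne fun h => hx0 ?_
  have hzero := (Finset.sum_eq_zero_iff_of_nonneg fun i _ => hx i).mp h.symm
  have hmem : x ∈ {x | ∀ i, 0 ≤ α i x} ∩ -{x | ∀ i, 0 ≤ α i x} :=
    ⟨hx, fun i => by simp [hzero i (Finset.mem_univ i)]⟩
  rwa [hpointed] at hmem

variable {V : Type*} [NormedAddCommGroup V] [NormedSpace ℝ V]

theorem interior_setOf_forall_hull_nonneg {S : Set V} (hS : S.Finite) (h0 : 0 ∉ S) :
    interior {η : V →L[ℝ] ℝ | ∀ x ∈ (PointedCone.hull ℝ S : Set V), 0 ≤ η x} =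
      {η | ∀ s ∈ S, 0 < η s} := by
  have hdual : {η : V →L[ℝ] ℝ | ∀ x ∈ (PointedCone.hull ℝ S : Set V), 0 ≤ η x} =
      ⋂ s ∈ S, ContinuousLinearMap.apply ℝ ℝ s ⁻¹' Set.Ici 0 := by
    ext η
    simp only [Set.mem_ofPred_eq, Set.mem_iInter, Set.mem_preimage,
      ContinuousLinearMap.apply_apply, Set.mem_Ici]
    exact ⟨fun h s hs => h s (PointedCone.subset_hull hs),
      fun h x hx => PointedCone.hull_le_comap_positive (β := (η : V →ₗ[ℝ] ℝ)) h hx⟩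
  have hsurj (s : V) (hs : s ∈ S) :
      Function.Surjective (ContinuousLinearMap.apply ℝ ℝ s : (V →L[ℝ] ℝ) →L[ℝ] ℝ) := fun r => by
    obtain ⟨f, hf⟩ := SeparatingDual.exists_eq_one (R := ℝ) (ne_of_mem_of_not_mem hs h0)
    exact ⟨r • f, by simp [hf]⟩
  rw [hdual, hS.interior_biInter]
  ext η
  simp +contextual [ContinuousLinearMap.interior_preimage _ (hsurj _ _)]

theorem isPolyhedralCell_setOf_forall_pos {S : Set V} (hS : S.Finite)
    (hne : {η : V →L[ℝ] ℝ | ∀ s ∈ S, 0 < η s}.Nonempty) :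
    IsPolyhedralCell {η : V →L[ℝ] ℝ | ∀ s ∈ S, 0 < η s} := by
  have := hS.to_subtype
  convert isPolyhedralCell_of_finite (ι := Empty) Empty.elim
    (fun s : S => (ContinuousLinearMap.apply ℝ ℝ (s : V)).toLinearMap.toAffineMap) ?_ using 1
  · ext; simp
  · simpa using hne

open scoped Pointwise in
theorem smul_mem_interior_dual {σ : Set V} {t : ℝ} (ht : 0 < t) {η : V →L[ℝ] ℝ}
    (hη : η ∈ interior {η : V →L[ℝ] ℝ | ∀ x ∈ σ, 0 ≤ η x}) :
    t • η ∈ interior {η : V →L[ℝ] ℝ | ∀ x ∈ σ, 0 ≤ η x} := by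
  have hcone : t • {η : V →L[ℝ] ℝ | ∀ x ∈ σ, 0 ≤ η x} = {η | ∀ x ∈ σ, 0 ≤ η x} := by
    ext η
    simp [Set.mem_smul_set_iff_inv_smul_mem₀ ht.ne', ht]
  rw [← hcone, interior_smul₀ ht.ne']
  exact Set.smul_mem_smul_set hη

theorem add_mem_interior_dual {σ : Set V} {η δ : V →L[ℝ] ℝ}
    (hη : η ∈ interior {η : V →L[ℝ] ℝ | ∀ x ∈ σ, 0 ≤ η x}) (hδ : ∀ x ∈ σ, 0 ≤ δ x) :
    η + δ ∈ interior {η : V →L[ℝ] ℝ | ∀ x ∈ σ, 0 ≤ η x} := by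
  refine interior_mono ?_ (subset_interior_add_left (Set.add_mem_add hη
    (show δ ∈ {η : V →L[ℝ] ℝ | ∀ x ∈ σ, 0 ≤ η x} from hδ)))
  rintro _ ⟨η, hη, δ, hδ, rfl⟩ x hx
  exact add_nonneg (hη x hx) (hδ x hx)

variable [FiniteDimensional ℝ V]

theorem IsPolyhedralCone.exists_interior_dual_eq {σ : Set V} (hσ : IsPolyhedralCone σ) :
    ∃ S : Set V, S.Finite ∧ 0 ∉ S ∧ S ⊆ σ ∧
      interior {η : V →L[ℝ] ℝ | ∀ x ∈ σ, 0 ≤ η x} = {η | ∀ s ∈ S, 0 < η s} := by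
  obtain ⟨S, hS, h0, rfl⟩ := hσ.exists_finite_hull_eq
  exact ⟨S, hS, h0, PointedCone.subset_hull, interior_setOf_forall_hull_nonneg hS h0⟩

theorem sum_mem_interior_dual {p : ℕ} {α : Fin p → V →ₗ[ℝ] ℝ}
    (hpointed : {x | ∀ i, 0 ≤ α i x} ∩ -{x | ∀ i, 0 ≤ α i x} = {0}) :
    ∑ i, (α i).toContinuousLinearMap ∈
      interior {η : V →L[ℝ] ℝ | ∀ x ∈ {x | ∀ i, 0 ≤ α i x}, 0 ≤ η x} := by
  obtain ⟨S, -, h0, hSσ, hint⟩ := IsPolyhedralCone.exists_interior_dual_eq ⟨p, α, rfl⟩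
  rw [hint]
  intro s hs
  simpa using sum_pos_of_inter_neg_eq_singleton hpointed (hSσ hs) (ne_of_mem_of_not_mem hs h0)

theorem IsPolyhedralCone.isPolyhedralCell_interior_dual {σ : Set V} (hσ : IsPolyhedralCone σ)
    (hpointed : σ ∩ -σ = {0}) :
    IsPolyhedralCell (interior {η : V →L[ℝ] ℝ | ∀ x ∈ σ, 0 ≤ η x}) := by
  obtain ⟨S, hS, -, -, hint⟩ := hσ.exists_interior_dual_eq
  obtain ⟨p, α, rfl⟩ := hσ
  rw [hint] at ⊢
  exact isPolyhedralCell_setOf_forall_pos hS (hint ▸ ⟨_, sum_mem_interior_dual hpointed⟩)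

theorem IsPolyhedralCone.exists_mem_interior_dual_pos {σ : Set V} (hσ : IsPolyhedralCone σ)
    (hpointed : σ ∩ -σ = {0}) {v : V} (hv : v ∉ -σ) :
    ∃ ξ ∈ interior {η : V →L[ℝ] ℝ | ∀ x ∈ σ, 0 ≤ η x}, 0 < ξ v := by
  obtain ⟨p, α, rfl⟩ := hσ
  obtain ⟨i, hi⟩ : ∃ i, 0 < α i v := by simpa using hv
  set η₀ : V →L[ℝ] ℝ := ∑ i, (α i).toContinuousLinearMap
  refine ⟨α i v • η₀ + (|η₀ v| + 1) • (α i).toContinuousLinearMap,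
    add_mem_interior_dual (smul_mem_interior_dual hi (sum_mem_interior_dual hpointed))
      fun x hx => by simpa using mul_nonneg (by positivity) (hx i), ?_⟩
  have h := mul_pos hi (show 0 < η₀ v + |η₀ v| + 1 by linarith [neg_abs_le (η₀ v)])
  simp only [add_apply, smul_apply, smul_eq_mul, LinearMap.coe_toContinuousLinearMap']
  linarith

end DualCone

open Classical in
/-- `FT(j_{σ^∨}) = i_{-σ}`: for a pointed closed polyhedral cone
`σ` in an `n`-dimensional real vector space `V`, with `U` the interior of the dual cone
`σ^∨ ⊆ V*`, and any `v ∈ V`, the Euler integral (on `V*`) of the indicator of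
`U ∩ {ξ | ξ v ≤ 1}` is `(-1)^n` if `v ∈ -σ` and `0` otherwise. -/
theorem statement4 (V : Type*) [NormedAddCommGroup V] [NormedSpace ℝ V]
    [FiniteDimensional ℝ V] (n : ℕ) (hn : Module.finrank ℝ V = n)
    (Id : PolF (V →L[ℝ] ℝ) →+ ℤ) (hId : IsEulerHom Id)
    (σ : Set V) (hσ : IsPolyhedralCone σ) (hpointed : σ ∩ (-σ) = {0})
    (U : Set (V →L[ℝ] ℝ)) (hU : U = interior {η : V →L[ℝ] ℝ | ∀ x ∈ σ, 0 ≤ η x})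
    (v : V) :
    ∃ hmem : ind (U ∩ {ξ : V →L[ℝ] ℝ | ξ v ≤ 1}) ∈ PolF (V →L[ℝ] ℝ),
      Id ⟨ind (U ∩ {ξ : V →L[ℝ] ℝ | ξ v ≤ 1}), hmem⟩ =
        if v ∈ -σ then (-1) ^ n else 0 := by
  subst hU
  have hcell := hσ.isPolyhedralCell_interior_dual hpointed
  split_ifs with hv
  · have hle : interior {η : V →L[ℝ] ℝ | ∀ x ∈ σ, 0 ≤ η x} ⊆ {ξ | ξ v ≤ 1} := fun ξ hξ =>
      (show ξ v ≤ 0 by simpa using interior_subset hξ (-v) hv).trans zero_le_one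
    have hdim : finrank ℝ (V →L[ℝ] ℝ) = n :=
      (LinearMap.toContinuousLinearMap.finrank_eq.symm.trans Subspace.dual_finrank_eq).trans hn
    rw [Set.inter_eq_self_of_subset_left hle]
    exact ⟨ind_mem_PolF hcell, hdim ▸ hId.apply_ind_of_isOpen hcell isOpen_interior⟩
  · exact hId.exists_apply_ind_inter_le_one_eq_zero hcell isOpen_interior
      (fun _ ht _ hη => smul_mem_interior_dual ht hη)
      (ContinuousLinearMap.apply ℝ ℝ v : (V →L[ℝ] ℝ) →L[ℝ] ℝ).toLinearMap
      (hσ.exists_mem_interior_dual_pos hpointed hv)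
end

section
/- Let V be a finite-dimensional real vector space, let f : V → ℤ be a polyhedral function, and let x ∈ V. Then there exists a unique conical polyhedral function g : V → ℤ such that g(v) = f(x + v) for all v in some neighborhood of 0 in V. (The assignment f ↦ g is the specialization operator ν_x : PolF(V) → PolF_{ℝ>0}(V); in particular the germ of a polyhedral function at any point is conical.) -/
/-- A function is conical if it is invariant under scaling by positive reals. -/
def Conical {W : Type*} [SMul ℝ W] (f : W → ℤ) : Prop :=
  ∀ c : ℝ, 0 < c → ∀ x, f (c • x) = f x

/-!
Near `x`, a cell `{F = 0, G > 0}` either is absent (when `x` violates one of the closed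
conditions `F i x = 0`, `G j x ≥ 0`) or coincides with `x` plus its tangent cone, which keeps the
equalities and only the inequalities active at `x`, linearized. So the germ of every generator is
conical and polyhedral, and the germs of polyhedral functions form a subgroup. Uniqueness holds
because a conical function is determined by its values near `0`.
-/

open Filter Topology

lemma ind_apply_eq_of_iff {α β : Type*} {C : Set α} {D : Set β} {a : α} {b : β}
    (h : a ∈ C ↔ b ∈ D) : ind C a = ind D b := by
  unfold ind
  split_ifs <;> tauto

section Conical

variable (W : Type*) [AddCommGroup W] [Module ℝ W]

def conicalSubgroup : AddSubgroup (W → ℤ) where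
  carrier := {g | Conical g}
  zero_mem' := fun _ _ _ => rfl
  add_mem' := fun h₁ h₂ c hc v => by simp only [Pi.add_apply, h₁ c hc v, h₂ c hc v]
  neg_mem' := fun h c hc v => by simp only [Pi.neg_apply, h c hc v]

variable {W}

lemma conical_ind_of_smul_mem_iff {D : Set W} (hD : ∀ c : ℝ, 0 < c → ∀ v, c • v ∈ D ↔ v ∈ D) :
    Conical (ind D) :=
  fun c hc v => ind_apply_eq_of_iff (hD c hc v)

lemma Conical.eq_of_eventuallyEq [TopologicalSpace W] [ContinuousSMul ℝ W] {g₁ g₂ : W → ℤ}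
    (h₁ : Conical g₁) (h₂ : Conical g₂) (h : g₁ =ᶠ[𝓝 0] g₂) : g₁ = g₂ := by
  funext v
  have hscale : Tendsto (fun c : ℝ => c • v) (𝓝[>] 0) (𝓝 0) :=
    ((continuous_id.smul continuous_const).tendsto' 0 0 (zero_smul ℝ v)).mono_left
      nhdsWithin_le_nhds
  obtain ⟨c, hcv, hc⟩ := ((hscale.eventually h).and self_mem_nhdsWithin).exists
  calc g₁ v = g₁ (c • v) := (h₁ c hc v).symm
    _ = g₂ (c • v) := hcv
    _ = g₂ v := h₂ c hc v

end Conical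

section CellAlgebra

variable {V : Type*} [AddCommGroup V] [Module ℝ V] {p q : ℕ}

def cellOf (F : Fin p → V →ᵃ[ℝ] ℝ) (G : Fin q → V →ᵃ[ℝ] ℝ) : Set V :=
  {y | (∀ i, F i y = 0) ∧ ∀ j, 0 < G j y}

def closedCellOf (F : Fin p → V →ᵃ[ℝ] ℝ) (G : Fin q → V →ᵃ[ℝ] ℝ) : Set V :=
  {y | (∀ i, F i y = 0) ∧ ∀ j, 0 ≤ G j y}

def cellTangentCone (F : Fin p → V →ᵃ[ℝ] ℝ) (G : Fin q → V →ᵃ[ℝ] ℝ) (x : V) : Set V :=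
  {v | (∀ i, (F i).linear v = 0) ∧ ∀ j, G j x = 0 → 0 < (G j).linear v}

/-- The unguarded inequalities are replaced by the trivial constraint `0 < 1`. -/
lemma isPolyhedralCell_of_guarded (F : Fin p → V →ᵃ[ℝ] ℝ) (G : Fin q → V →ᵃ[ℝ] ℝ)
    (P : Fin q → Prop) (hne : {v | (∀ i, F i v = 0) ∧ ∀ j, P j → 0 < G j v}.Nonempty) :
    IsPolyhedralCell {v | (∀ i, F i v = 0) ∧ ∀ j, P j → 0 < G j v} := by
  classical
  refine ⟨hne, p, q, F, fun j => if P j then G j else AffineMap.const ℝ V 1, ?_⟩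
  ext v
  refine and_congr_right fun _ => forall_congr' fun j => ?_
  by_cases hj : P j <;> simp [hj]

lemma AffineMap.apply_add (H : V →ᵃ[ℝ] ℝ) (x v : V) : H (x + v) = H x + H.linear v := by
  rw [add_comm x v, ← vadd_eq_add, H.map_vadd, vadd_eq_add, add_comm]

variable (F : Fin p → V →ᵃ[ℝ] ℝ) (G : Fin q → V →ᵃ[ℝ] ℝ) {x : V}

lemma smul_mem_cellTangentCone_iff {c : ℝ} (hc : 0 < c) (v : V) :
    c • v ∈ cellTangentCone F G x ↔ v ∈ cellTangentCone F G x := by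
  simp only [cellTangentCone, Set.mem_ofPred_eq, map_smul, smul_eq_mul, mul_eq_zero,
    hc.ne', false_or, mul_pos_iff_of_pos_left hc]

lemma isPolyhedralCell_cellTangentCone (hx : x ∈ closedCellOf F G) (hne : (cellOf F G).Nonempty) :
    IsPolyhedralCell (cellTangentCone F G x) := by
  obtain ⟨y, hyF, hyG⟩ := hne
  have hlin : ∀ H : V →ᵃ[ℝ] ℝ, H.linear (y - x) = H y - H x := fun H => H.linearMap_vsub y x
  apply isPolyhedralCell_of_guarded (fun i => (F i).linear.toAffineMap)
    (fun j => (G j).linear.toAffineMap)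
  refine ⟨y - x, fun i => ?_, fun j hj => ?_⟩
  · simp [hlin, hyF i, hx.1 i]
  · simp [hlin, hyG j, hj]

end CellAlgebra

section CellGerm

variable {V : Type*} [NormedAddCommGroup V] [NormedSpace ℝ V] [FiniteDimensional ℝ V] {p q : ℕ}

lemma AffineMap.tendsto_apply_add (H : V →ᵃ[ℝ] ℝ) (x : V) :
    Tendsto (fun v => H (x + v)) (𝓝 0) (𝓝 (H x)) :=
  (H.continuous_of_finiteDimensional.comp (continuous_const_add x)).tendsto' 0 _ (by simp)

variable (F : Fin p → V →ᵃ[ℝ] ℝ) (G : Fin q → V →ᵃ[ℝ] ℝ) {x : V}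

/-- The inactive inequalities hold near `x` by continuity, and the active ones see only the
linear part. -/
lemma eventually_add_mem_cellOf_iff (hx : x ∈ closedCellOf F G) :
    ∀ᶠ v in 𝓝 0, x + v ∈ cellOf F G ↔ v ∈ cellTangentCone F G x := by
  have hinactive : ∀ᶠ v in 𝓝 (0 : V), ∀ j, G j x ≠ 0 → 0 < G j (x + v) :=
    eventually_all.2 fun j => by
      rcases (hx.2 j).lt_or_eq with hj | hj
      · exact ((G j).tendsto_apply_add x |>.eventually_const_lt hj).mono fun _ h _ => h
      · exact Eventually.of_forall fun _ h => absurd hj.symm h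
  filter_upwards [hinactive] with v hv
  simp only [cellOf, cellTangentCone, Set.mem_ofPred_eq, AffineMap.apply_add, hx.1, zero_add]
  refine and_congr_right fun _ => forall_congr' fun j => ?_
  by_cases hj : G j x = 0
  · simp [hj]
  · simpa [hj, AffineMap.apply_add] using hv j hj

lemma eventually_add_notMem_cellOf (hx : x ∉ closedCellOf F G) :
    ∀ᶠ v in 𝓝 0, x + v ∉ cellOf F G := by
  simp only [closedCellOf, Set.mem_ofPred_eq, not_and_or, not_forall, not_le] at hx
  rcases hx with ⟨i, hi⟩ | ⟨j, hj⟩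
  · exact ((F i).tendsto_apply_add x |>.eventually_ne hi).mono fun _ hv hm => hv (hm.1 i)
  · exact ((G j).tendsto_apply_add x |>.eventually_lt_const hj).mono
      fun _ hv hm => (hm.2 j).not_gt hv

end CellGerm

section Germ

variable {V : Type*} [NormedAddCommGroup V] [NormedSpace ℝ V] [FiniteDimensional ℝ V]

def conicalGermSubgroup (x : V) : AddSubgroup (V → ℤ) where
  carrier := {f | ∃ g ∈ PolF V ⊓ conicalSubgroup V, ∀ᶠ v in 𝓝 0, g v = f (x + v)}
  zero_mem' := ⟨0, zero_mem _, Eventually.of_forall fun _ => rfl⟩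
  add_mem' := fun ⟨g₁, hg₁, h₁⟩ ⟨g₂, hg₂, h₂⟩ =>
    ⟨g₁ + g₂, add_mem hg₁ hg₂, (h₁.and h₂).mono fun _ h => congrArg₂ (· + ·) h.1 h.2⟩
  neg_mem' := fun ⟨g, hg, h⟩ => ⟨-g, neg_mem hg, h.mono fun _ h => congrArg Neg.neg h⟩

lemma ind_mem_conicalGermSubgroup {C : Set V} (hC : IsPolyhedralCell C) (x : V) :
    ind C ∈ conicalGermSubgroup x := by
  obtain ⟨hne, p, q, F, G, rfl : C = cellOf F G⟩ := hC
  by_cases hx : x ∈ closedCellOf F G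
  · refine ⟨ind (cellTangentCone F G x),
      ⟨ind_mem_PolF (isPolyhedralCell_cellTangentCone F G hx hne),
        conical_ind_of_smul_mem_iff fun _ hc => smul_mem_cellTangentCone_iff F G hc⟩, ?_⟩
    filter_upwards [eventually_add_mem_cellOf_iff F G hx] with v hv
    exact ind_apply_eq_of_iff hv.symm
  · refine ⟨0, zero_mem _, ?_⟩
    filter_upwards [eventually_add_notMem_cellOf F G hx] with v hv
    simp [ind, hv]

lemma PolF_le_conicalGermSubgroup (x : V) : PolF V ≤ conicalGermSubgroup x :=
  (AddSubgroup.closure_le _).2 fun _ ⟨_, hC, hf⟩ => hf ▸ ind_mem_conicalGermSubgroup hC x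

end Germ

/-- Specialization: the germ of a polyhedral function at any point is
(uniquely) represented by a conical polyhedral function.  For `f ∈ PolF V` and `x ∈ V`
there is a unique conical polyhedral `g` with `g v = f (x + v)` for all `v` near `0`. -/
theorem statement7 (V : Type*) [NormedAddCommGroup V] [NormedSpace ℝ V]
    [FiniteDimensional ℝ V]
    (f : V → ℤ) (hf : f ∈ PolF V) (x : V) :
    ∃! g : V → ℤ, (g ∈ PolF V ∧ Conical g) ∧ ∀ᶠ v in nhds (0 : V), g v = f (x + v) := by
  obtain ⟨g, ⟨hgPolF, hgConical⟩, hg⟩ := PolF_le_conicalGermSubgroup x hf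
  refine ⟨g, ⟨⟨hgPolF, hgConical⟩, hg⟩, fun g' ⟨⟨_, hg'Conical⟩, hg'⟩ => ?_⟩
  exact hg'Conical.eq_of_eventuallyEq hgConical ((hg'.and hg).mono fun _ h => h.1.trans h.2.symm)
end

section
/- Let N be a finite-dimensional real inner product space, let σ and τ be closed convex cones in N, and let f ∈ τ. Then the infimum (taken in the extended reals) of the linear functional x ↦ ⟨f, x⟩ over the dual cone (σ ∩ τ)^∨ equals its infimum over the dual cone σ^∨. Concretely, both infima equal 0 if f ∈ σ, and both equal −∞ if f ∉ σ. -/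
/-!
Each infimum runs over a cone, so it is `0` if `⟪f, ·⟫` is nonnegative on the cone and `⊥` as
soon as it takes a negative value there. If `f ∈ σ`, then `f ∈ σ ∩ τ` pairs nonnegatively with
both dual cones. If `f ∉ σ`, Farkas' lemma for the closed convex cone `σ` gives
`x ∈ σ^∨ ⊆ (σ ∩ τ)^∨` with `⟪f, x⟫ < 0`.
-/

open scoped RealInnerProductSpace

theorem Convex.add_mem_of_smul_mem {𝕜 E : Type*} [Field 𝕜] [LinearOrder 𝕜]
    [IsStrictOrderedRing 𝕜] [AddCommGroup E] [Module 𝕜 E] {s : Set E} (hconv : Convex 𝕜 s)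
    (hsmul : ∀ c : 𝕜, 0 ≤ c → ∀ x ∈ s, c • x ∈ s) {x y : E} (hx : x ∈ s) (hy : y ∈ s) :
    x + y ∈ s := by
  have hmid : (2⁻¹ : 𝕜) • x + (2⁻¹ : 𝕜) • y ∈ s :=
    hconv hx hy (by positivity) (by positivity) (by norm_num)
  simpa [smul_add, smul_smul] using hsmul 2 zero_le_two _ hmid

namespace ProperCone

variable {N : Type*} [NormedAddCommGroup N] [InnerProductSpace ℝ N]

def ofConvex (s : Set N) (hconv : Convex ℝ s) (hsmul : ∀ c : ℝ, 0 ≤ c → ∀ x ∈ s, c • x ∈ s)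
    (h0 : (0 : N) ∈ s) (hcl : IsClosed s) : ProperCone ℝ N where
  carrier := s
  add_mem' := hconv.add_mem_of_smul_mem hsmul
  zero_mem' := h0
  smul_mem' c _ hx := hsmul c c.2 _ hx
  isClosed' := hcl

theorem iInf_inner_eq_bot_of_inner_neg (C : ProperCone ℝ N) {f x : N} (hx : x ∈ C)
    (hfx : ⟪f, x⟫ < 0) : ⨅ y ∈ (C : Set N), (⟪f, y⟫ : EReal) = ⊥ := by
  refine (iInf₂_eq_bot _).2 fun b hb => ?_
  obtain ⟨r, -, hrb⟩ := EReal.exists_between_coe_real hb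
  obtain ⟨n, hn⟩ := exists_nat_gt (r / ⟪f, x⟫)
  refine ⟨(n : ℝ) • x, C.smul_mem hx n.cast_nonneg, lt_trans ?_ hrb⟩
  rw [real_inner_smul_right, EReal.coe_lt_coe_iff]
  exact (div_lt_iff_of_neg hfx).1 hn

variable [CompleteSpace N]

theorem iInf_inner_eq_zero_of_mem_innerDual (C : ProperCone ℝ N) {f : N}
    (hf : f ∈ innerDual (C : Set N)) : ⨅ y ∈ (C : Set N), (⟪f, y⟫ : EReal) = 0 := by
  refine le_antisymm (iInf₂_le_of_le 0 C.zero_mem (by simp)) (le_iInf₂ fun y hy => ?_)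
  exact EReal.coe_nonneg.2 (real_inner_comm f y ▸ hf hy)

theorem subset_innerDual_innerDual (s : Set N) : s ⊆ innerDual (innerDual s : Set N) :=
  fun x hx y hy => by
    show 0 ≤ ⟪y, x⟫
    rw [real_inner_comm]
    exact hy hx

end ProperCone

theorem statement11_general (N : Type*) [NormedAddCommGroup N] [InnerProductSpace ℝ N]
    [FiniteDimensional ℝ N]
    (σ τ : Set N)
    (hσconv : Convex ℝ σ) (hσsmul : ∀ c : ℝ, 0 ≤ c → ∀ x ∈ σ, c • x ∈ σ)
    (hσ0 : (0 : N) ∈ σ) (hσcl : IsClosed σ)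
    (f : N) (hf : f ∈ τ) :
    (⨅ x ∈ {y : N | ∀ c ∈ σ ∩ τ, (0 : ℝ) ≤ inner ℝ c y}, ((inner ℝ f x : ℝ) : EReal)) =
        (⨅ x ∈ {y : N | ∀ c ∈ σ, (0 : ℝ) ≤ inner ℝ c y}, ((inner ℝ f x : ℝ) : EReal)) ∧
      (f ∈ σ →
        (⨅ x ∈ {y : N | ∀ c ∈ σ ∩ τ, (0 : ℝ) ≤ inner ℝ c y}, ((inner ℝ f x : ℝ) : EReal)) = 0 ∧
        (⨅ x ∈ {y : N | ∀ c ∈ σ, (0 : ℝ) ≤ inner ℝ c y}, ((inner ℝ f x : ℝ) : EReal)) = 0) ∧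
      (f ∉ σ →
        (⨅ x ∈ {y : N | ∀ c ∈ σ ∩ τ, (0 : ℝ) ≤ inner ℝ c y}, ((inner ℝ f x : ℝ) : EReal)) = ⊥ ∧
        (⨅ x ∈ {y : N | ∀ c ∈ σ, (0 : ℝ) ≤ inner ℝ c y}, ((inner ℝ f x : ℝ) : EReal)) = ⊥) := by
  open ProperCone in
  by_cases hfσ : f ∈ σ
  · have h₁ := iInf_inner_eq_zero_of_mem_innerDual _
      (subset_innerDual_innerDual (σ ∩ τ) ⟨hfσ, hf⟩)
    have h₂ := iInf_inner_eq_zero_of_mem_innerDual _ (subset_innerDual_innerDual σ hfσ)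
    exact ⟨h₁.trans h₂.symm, fun _ => ⟨h₁, h₂⟩, absurd hfσ⟩
  · obtain ⟨x, hx, hfx⟩ := (ofConvex σ hσconv hσsmul hσ0 hσcl).hyperplane_separation' hfσ
    have hx' : x ∈ innerDual (σ ∩ τ) := innerDual_le_innerDual Set.inter_subset_left hx
    have h₁ := iInf_inner_eq_bot_of_inner_neg _ hx' hfx
    have h₂ := iInf_inner_eq_bot_of_inner_neg (innerDual σ) hx hfx
    exact ⟨h₁.trans h₂.symm, fun h => absurd h hfσ, fun _ => ⟨h₁, h₂⟩⟩

/-- Let `σ, τ` be closed convex cones in a finite-dimensional real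
inner product space `N` and let `f ∈ τ`.  Then the infimum (in the extended reals) of
`x ↦ ⟪f, x⟫` over the dual cone `(σ ∩ τ)^∨` equals its infimum over `σ^∨`; concretely
both equal `0` if `f ∈ σ` and `−∞` if `f ∉ σ`. -/
theorem statement11 (N : Type*) [NormedAddCommGroup N] [InnerProductSpace ℝ N]
    [FiniteDimensional ℝ N]
    (σ τ : Set N)
    (hσconv : Convex ℝ σ) (hσsmul : ∀ c : ℝ, 0 ≤ c → ∀ x ∈ σ, c • x ∈ σ)
    (hσ0 : (0 : N) ∈ σ) (hσcl : IsClosed σ)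
    (hτconv : Convex ℝ τ) (hτsmul : ∀ c : ℝ, 0 ≤ c → ∀ x ∈ τ, c • x ∈ τ)
    (hτ0 : (0 : N) ∈ τ) (hτcl : IsClosed τ)
    (f : N) (hf : f ∈ τ) :
    (⨅ x ∈ {y : N | ∀ c ∈ σ ∩ τ, (0 : ℝ) ≤ inner ℝ c y}, ((inner ℝ f x : ℝ) : EReal)) =
        (⨅ x ∈ {y : N | ∀ c ∈ σ, (0 : ℝ) ≤ inner ℝ c y}, ((inner ℝ f x : ℝ) : EReal)) ∧
      (f ∈ σ →
        (⨅ x ∈ {y : N | ∀ c ∈ σ ∩ τ, (0 : ℝ) ≤ inner ℝ c y}, ((inner ℝ f x : ℝ) : EReal)) = 0 ∧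
        (⨅ x ∈ {y : N | ∀ c ∈ σ, (0 : ℝ) ≤ inner ℝ c y}, ((inner ℝ f x : ℝ) : EReal)) = 0) ∧
      (f ∉ σ →
        (⨅ x ∈ {y : N | ∀ c ∈ σ ∩ τ, (0 : ℝ) ≤ inner ℝ c y}, ((inner ℝ f x : ℝ) : EReal)) = ⊥ ∧
        (⨅ x ∈ {y : N | ∀ c ∈ σ, (0 : ℝ) ≤ inner ℝ c y}, ((inner ℝ f x : ℝ) : EReal)) = ⊥) :=
  statement11_general N σ τ hσconv hσsmul hσ0 hσcl f hf
end

section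
/- Let R be a commutative ring and let M = ⊕_{i∈ℤ} M_i be a ℤ-graded module over the polynomial ring R[z], where z is homogeneous of degree 1 (so z·M_i ⊆ M_{i+1}). Assume multiplication by z is injective on M. Then for every i ∈ ℤ, M_i ∩ (z−1)M = 0; equivalently, the composite M_i ↪ M → M/(z−1)M of the inclusion of the degree-i component with the quotient map to the fiber at 1 is injective. -/
open Polynomial

variable (R M : Type*) [CommRing R] [AddCommGroup M] [Module R M]
  [Module (Polynomial R) M] [IsScalarTower R (Polynomial R) M]

/-- Multiplication by `z` (`= X`) on an `R[z]`-module, as an `R`-linear endomorphism. -/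
noncomputable def zMul : M →ₗ[R] M where
  toFun m := (X : Polynomial R) • m
  map_add' a b := smul_add _ a b
  map_smul' r m := by simpa using smul_comm (X : Polynomial R) r m

/-- Multiplication by `z − 1` on an `R[z]`-module, as an `R`-linear endomorphism. -/
noncomputable def zSubOne : M →ₗ[R] M where
  toFun m := (X - 1 : Polynomial R) • m
  map_add' a b := smul_add _ a b
  map_smul' r m := by simpa using smul_comm (X - 1 : Polynomial R) r m

/-- The `R`-submodule `(z − 1)·M ⊆ M`. -/
noncomputable def zSubOneRange : Submodule R M := LinearMap.range (zSubOne R M)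

/-- The Klyachko filtration of the fiber `M/(z−1)M` of a `ℤ`-graded `R[z]`-module at `1`:
`F_{≤ i}` is the image of the degree-`i` component `ℳ i` under the quotient map. -/
noncomputable def klyachkoF (ℳ : ℤ → Submodule R M) (i : ℤ) :
    Submodule R (M ⧸ zSubOneRange R M) :=
  Submodule.map (zSubOneRange R M).mkQ (ℳ i)

/-!
Write `m = (z - 1) n = z n - n` with `m` of degree `i` and suppose `n ≠ 0`, with homogeneous
components of degrees between `e` and `d`. Since `z` raises degrees by one and is injective, the
degree `d + 1` component of `z n - n` is `z n_d ≠ 0` and the degree `e` component is `-n_e ≠ 0`;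
homogeneity of `m` forces `d + 1 = i = e`, contradicting `e ≤ d`.
-/

namespace DirectSum

variable {M σ : Type*} [AddCommGroup M] [SetLike σ M] [AddSubgroupClass σ M]
  {ℳ : ℤ → σ} [Decomposition ℳ] {f : M →+ M}

theorem decompose_map_succ_of_mapsTo (hf : ∀ k, ∀ m ∈ ℳ k, f m ∈ ℳ (k + 1)) (n : M) (k : ℤ) :
    (decompose ℳ (f n) (k + 1) : M) = f (decompose ℳ n k) := by
  induction n using Decomposition.inductionOn ℳ with
  | zero => simp
  | @homogeneous j m =>
    rcases eq_or_ne j k with rfl | hjk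
    · rw [decompose_of_mem_same ℳ (hf j m m.2), decompose_of_mem_same ℳ m.2]
    · rw [decompose_of_mem_ne ℳ (hf j m m.2) (by omega), decompose_of_mem_ne ℳ m.2 hjk,
        map_zero]
  | add a b ha hb => simp only [map_add, decompose_add, add_apply, AddMemClass.coe_add, ha, hb]

theorem eq_zero_of_map_sub_self_mem (hf : ∀ k, ∀ m ∈ ℳ k, f m ∈ ℳ (k + 1))
    (hinj : Function.Injective f) {n : M} {i : ℤ} (hn : f n - n ∈ ℳ i) : n = 0 := by
  classical
  by_contra hn0
  set c : ℤ → M := fun k ↦ decompose ℳ n k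
  have mem_support : ∀ k, k ∈ (decompose ℳ n).support ↔ c k ≠ 0 := fun k ↦ by simp [c]
  have hs : (decompose ℳ n).support.Nonempty := by
    rwa [Finset.nonempty_iff_ne_empty, Ne, DFinsupp.support_eq_empty, ← decompose_zero (ℳ := ℳ),
      (decompose ℳ).injective.eq_iff]
  have component : ∀ k, (decompose ℳ (f n - n) (k + 1) : M) = f (c k) - c (k + 1) := fun k ↦ by
    rw [decompose_sub, sub_apply, AddSubgroupClass.coe_sub, decompose_map_succ_of_mapsTo hf]
  have off_degree : ∀ k ≠ i, (decompose ℳ (f n - n) k : M) = 0 :=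
    fun k hk ↦ decompose_of_mem_ne ℳ hn hk.symm
  set d := (decompose ℳ n).support.max' hs
  set e := (decompose ℳ n).support.min' hs
  have top_degree : d + 1 = i := by
    have hd := (mem_support d).1 (Finset.max'_mem _ hs)
    have hd1 : c (d + 1) = 0 := by
      by_contra h
      exact absurd (Finset.le_max' _ _ ((mem_support _).2 h)) (by omega)
    by_contra h
    have := component d
    rw [off_degree _ h, hd1, sub_zero, ← map_zero f] at this
    exact hd (hinj this).symm
  have bottom_degree : e = i := by
    have he := (mem_support e).1 (Finset.min'_mem _ hs)
    have he1 : c (e - 1) = 0 := by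
      by_contra h
      exact absurd (Finset.min'_le _ _ ((mem_support _).2 h)) (by omega)
    by_contra h
    have := component (e - 1)
    rw [sub_add_cancel, off_degree _ h, he1, map_zero, zero_sub, zero_eq_neg] at this
    exact he this
  have := Finset.min'_le_max' _ hs
  omega

end DirectSum

theorem zSubOne_apply {R M : Type*} [CommRing R] [AddCommGroup M] [Module R M]
    [Module (Polynomial R) M] [IsScalarTower R (Polynomial R) M] (n : M) :
    zSubOne R M n = zMul R M n - n :=
  (sub_smul _ _ n).trans (congrArg _ (one_smul _ n))

/-- Let `M = ⊕ᵢ Mᵢ` be a `ℤ`-graded module over `R[z]` (`z` of degree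
`1`) on which multiplication by `z` is injective.  Then for every `i`,
`Mᵢ ∩ (z−1)M = 0`; equivalently, the composite `Mᵢ ↪ M → M/(z−1)M` is injective. -/
theorem statement14 (R M : Type*) [CommRing R] [AddCommGroup M] [Module R M]
    [Module (Polynomial R) M] [IsScalarTower R (Polynomial R) M]
    (ℳ : ℤ → Submodule R M) (hinternal : DirectSum.IsInternal ℳ)
    (hdeg : ∀ i : ℤ, ∀ m ∈ ℳ i, (X : Polynomial R) • m ∈ ℳ (i + 1))
    (hinj : Function.Injective (zMul R M)) (i : ℤ) :
    ℳ i ⊓ zSubOneRange R M = ⊥ ∧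
      Function.Injective ((zSubOneRange R M).mkQ.comp (ℳ i).subtype) := by
  let _ := hinternal.chooseDecomposition
  have hdisj : ℳ i ⊓ zSubOneRange R M = ⊥ := by
    rw [eq_bot_iff]
    rintro _ ⟨hm, n, rfl⟩
    rw [zSubOne_apply] at hm ⊢
    rw [DirectSum.eq_zero_of_map_sub_self_mem (f := (zMul R M).toAddMonoidHom) hdeg hinj hm,
      map_zero, sub_zero]
    exact zero_mem _
  refine ⟨hdisj, ?_⟩
  rw [← LinearMap.ker_eq_bot, LinearMap.ker_comp, Submodule.ker_mkQ,
    ← Submodule.disjoint_iff_comap_eq_bot, disjoint_iff]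
  exact hdisj
end
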